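/- arXiv:2206.06644 — 6 statements merged into one kernel-verified Lean document; each statement's English description precedes it below -/
import Mathlib

section
/- Let W be a symmetric n×n matrix and D a diagonal positive definite n×n matrix. Then Y ∈ ℝ^{n×K} satisfies WY = DY(Yᵀ(D/n)Y) if and only if D^{1/2}Y spans an invariant subspace of D^{-1/2}WD^{-1/2}; equivalently, Y is a stationary point of f(Y) = trace(-2YᵀWY/n² + Yᵀ(D/n²)YYᵀ(D/n²)Y) if and only if Y = UΛ^{1/2}PQ, where (Λ, U) are the eigenvalues and D-orthonormal eigenvectors of the pencil (W,D), P consists of the first r ≤ K columns of a permutation matrix restricted to indices with nonnegative eigenvalues, and Q ∈ ℝ^{r×K} satisfies QQᵀ = I. -/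
/-!
Diagonalize the Gram matrix `YᵀDY = V diag(ν) Vᵀ` with `V` orthogonal. Then `Z = YV` has
`D`-orthogonal columns (`ZᵀDZ = diag ν`) and the stationarity equation
`WY = c⁻¹ DY(YᵀDY)`, `c = n²`, becomes `WZ = c⁻¹ DZ diag(ν)`, i.e. every column of `Z` is an eigenvector of the pencil `(W, D)` with
eigenvalue `ν/c ≥ 0`. Columns with `ν = 0` vanish because `D` is positive definite; rescaling the
others to `D`-norm `√c` gives `U`, and the corresponding rows of `Vᵀ` give `Q`. Conversely, for
`Y = U Λ^{1/2} Q` one computes `YᵀDY = c QᵀΛQ`, and `QQᵀ = 1` lets `Λ` pass through.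
-/

open Matrix

namespace Matrix

theorem PosSemidef.exists_orthogonal_diagonalization {κ : Type*} [Fintype κ] [DecidableEq κ]
    {N : Matrix κ κ ℝ} (hN : N.PosSemidef) :
    ∃ (V : Matrix κ κ ℝ) (ν : κ → ℝ), (∀ k, 0 ≤ ν k) ∧ Vᵀ * V = 1 ∧ V * Vᵀ = 1 ∧
      N = V * diagonal ν * Vᵀ := by
  have hV := hN.1.eigenvectorUnitary.2
  have hspec := hN.1.spectral_theorem
  simp only [Unitary.conjStarAlgAut_apply, RCLike.ofReal_real_eq_id, Function.id_comp,
    star_eq_conjTranspose, conjTranspose_eq_transpose_of_trivial] at hV hspec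
  exact ⟨_, _, hN.eigenvalues_nonneg, hV.1, hV.2, hspec⟩

theorem PosDef.col_eq_zero_of_transpose_mul_mul_apply_eq_zero {m κ : Type*} [Fintype m]
    {D : Matrix m m ℝ} (hD : D.PosDef) {Z : Matrix m κ ℝ} {k : κ} (hk : (Zᵀ * D * Z) k k = 0)
    (i : m) : Z i k = 0 := by
  by_contra hne
  have hx : (fun i => Z i k) ≠ 0 := fun h => hne (congrFun h i)
  have hq : star (fun i => Z i k) ⬝ᵥ D *ᵥ (fun i => Z i k) = (Zᵀ * D * Z) k k := by
    rw [Matrix.mul_assoc]; rfl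
  exact (hD.dotProduct_mulVec_pos hx).ne' (hq.trans hk)

theorem mul_eq_submatrix_mul_submatrix_of_col_eq_zero {α m κ l : Type*} [Fintype κ]
    [NonUnitalNonAssocSemiring α] {A : Matrix m κ α} (B : Matrix κ l α) (p : κ → Prop)
    [DecidablePred p] (hA : ∀ k, ¬p k → ∀ i, A i k = 0) :
    A * B = A.submatrix id (Subtype.val : {k // p k} → κ) * B.submatrix Subtype.val id := by
  ext i j
  rw [mul_apply, ← Fintype.sum_subtype_add_sum_subtype p,
    Fintype.sum_eq_zero (fun k : {k // ¬p k} => A i k * B k j) (fun k => by simp [hA k k.2 i]),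
    add_zero]
  rfl

variable {m κ ι ι' : Type*} [Fintype m] [Fintype κ] [Fintype ι] [Fintype ι']
  [DecidableEq ι] [DecidableEq ι']

/-- `Y = U Λ^{1/2} Q` where the columns of `U` are eigenvectors of the pencil `(W, D)` with
eigenvalues `Λ = diag lam ≥ 0`, normalized by `UᵀDU = c • 1`. The paper's column selection `P`
is absorbed into `U`, whose columns are only the selected eigenvectors. -/
structure IsPencilFactorization (c : ℝ) (W D : Matrix m m ℝ) (Y : Matrix m κ ℝ)
    (U : Matrix m ι ℝ) (lam : ι → ℝ) (Q : Matrix ι κ ℝ) : Prop where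
  lam_nonneg : ∀ i, 0 ≤ lam i
  mul_eq : W * U = D * U * diagonal lam
  transpose_mul_mul : Uᵀ * D * U = c • 1
  mul_transpose : Q * Qᵀ = 1
  eq : Y = U * diagonal (fun i => √(lam i)) * Q

namespace IsPencilFactorization

variable {c : ℝ} {W D : Matrix m m ℝ} {Y : Matrix m κ ℝ} {U : Matrix m ι ℝ} {lam : ι → ℝ}
  {Q : Matrix ι κ ℝ}

theorem reindex (h : IsPencilFactorization c W D Y U lam Q) (e : ι ≃ ι') :
    IsPencilFactorization c W D Y (U.submatrix id e.symm) (lam ∘ e.symm)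
      (Q.submatrix e.symm id) where
  lam_nonneg i := h.lam_nonneg _
  mul_eq := by
    change (W * U).submatrix id e.symm = _
    rw [h.mul_eq, ← submatrix_diagonal_equiv, ← submatrix_mul_equiv (e₂ := e.symm)]
    rfl
  transpose_mul_mul := by
    change (Uᵀ * D * U).submatrix e.symm e.symm = _
    rw [h.transpose_mul_mul, smul_one_eq_diagonal, smul_one_eq_diagonal, submatrix_diagonal_equiv]
    rfl
  mul_transpose := by
    change (Q * Qᵀ).submatrix e.symm e.symm = _
    rw [h.mul_transpose, submatrix_one_equiv]
  eq := by
    change _ = U.submatrix id e.symm * diagonal ((fun i => √(lam i)) ∘ e.symm) *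
      Q.submatrix e.symm id
    rw [← submatrix_diagonal_equiv, submatrix_mul_equiv, submatrix_mul_equiv, submatrix_id_id,
      h.eq]

theorem stationary (h : IsPencilFactorization c W D Y U lam Q) (hc : c ≠ 0) :
    W * Y = c⁻¹ • (D * Y * (Yᵀ * D * Y)) := by
  set S := diagonal fun i => √(lam i)
  have hY : Y = U * S * Q := h.eq
  have hSS : S * S = diagonal lam := by
    rw [diagonal_mul_diagonal]
    exact congrArg diagonal (funext fun i => Real.mul_self_sqrt (h.lam_nonneg i))
  have hS_comm : S * diagonal lam = diagonal lam * S := by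
    rw [diagonal_mul_diagonal, diagonal_mul_diagonal]
    exact congrArg diagonal (funext fun i => mul_comm _ _)
  have hgram : Yᵀ * D * Y = c • (Qᵀ * diagonal lam * Q) := by
    calc Yᵀ * D * Y = Qᵀ * Sᵀ * (Uᵀ * D * U) * S * Q := by
          rw [hY]; simp only [transpose_mul, Matrix.mul_assoc]
      _ = c • (Qᵀ * diagonal lam * Q) := by
          rw [h.transpose_mul_mul, show Sᵀ = S from diagonal_transpose _, ← hSS]
          simp only [Matrix.mul_smul, Matrix.smul_mul, Matrix.mul_one, Matrix.mul_assoc]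
  calc W * Y = W * U * S * Q := by rw [hY]; simp only [Matrix.mul_assoc]
    _ = D * U * S * (Q * Qᵀ) * diagonal lam * Q := by
        rw [h.mul_eq, h.mul_transpose, Matrix.mul_one, Matrix.mul_assoc (D * U) S, hS_comm]
        simp only [Matrix.mul_assoc]
    _ = c⁻¹ • (D * Y * (Yᵀ * D * Y)) := by
        rw [hgram, Matrix.mul_smul, smul_smul, inv_mul_cancel₀ hc, one_smul, hY]
        simp only [Matrix.mul_assoc]

end IsPencilFactorization

theorem exists_isPencilFactorization_of_diagonalization [DecidableEq κ] {c : ℝ} (hc : 0 < c)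
    {W D : Matrix m m ℝ} (hD : D.PosDef) {Z : Matrix m κ ℝ} {V : Matrix κ κ ℝ} {ν : κ → ℝ}
    (hν : ∀ k, 0 ≤ ν k) (hV : Vᵀ * V = 1) (hZ : Zᵀ * D * Z = diagonal ν)
    (hWZ : W * Z = c⁻¹ • (D * Z * diagonal ν)) :
    ∃ (U : Matrix m {k // ν k ≠ 0} ℝ) (lam : {k // ν k ≠ 0} → ℝ)
      (Q : Matrix {k // ν k ≠ 0} κ ℝ), IsPencilFactorization c W D (Z * Vᵀ) U lam Q := by
  set P := Z.submatrix id (Subtype.val : {k // ν k ≠ 0} → κ)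
  set s : {k // ν k ≠ 0} → ℝ := fun j => √c / √(ν j)
  have hpos (j : {k // ν k ≠ 0}) : 0 < ν j := (hν j).lt_of_ne' j.2
  have hs_sq (j : {k // ν k ≠ 0}) : s j * ν j * s j = c := by
    have := Real.sqrt_pos.2 (hpos j)
    simp only [s]
    field_simp
    rw [Real.sq_sqrt hc.le, Real.sq_sqrt (hpos j).le, mul_comm]
  have hs_sqrt (j : {k // ν k ≠ 0}) : s j * √(ν j / c) = 1 := by
    have := Real.sqrt_pos.2 (hpos j)
    have := Real.sqrt_pos.2 hc
    simp only [s]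
    rw [Real.sqrt_div (hν _)]
    field_simp
  have hcol (k : κ) (hk : ¬ν k ≠ 0) (i : m) : Z i k = 0 :=
    hD.col_eq_zero_of_transpose_mul_mul_apply_eq_zero
      (by rwa [hZ, diagonal_apply_eq, ← not_ne_iff]) i
  have hPDP : Pᵀ * D * P = diagonal fun j : {k // ν k ≠ 0} => ν j := by
    change (Zᵀ * D * Z).submatrix Subtype.val Subtype.val = _
    rw [hZ, submatrix_diagonal _ _ Subtype.val_injective]
    rfl
  have hWP : W * P = c⁻¹ • (D * P * diagonal fun j : {k // ν k ≠ 0} => ν j) := by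
    change (W * Z).submatrix id Subtype.val = _
    ext i j
    simp only [hWZ, submatrix_apply, smul_apply, id]
    rw [mul_diagonal, mul_diagonal]
    rfl
  refine ⟨P * diagonal s, fun j => ν j / c, Vᵀ.submatrix Subtype.val id, ⟨?_, ?_, ?_, ?_, ?_⟩⟩
  · exact fun j => div_nonneg (hν _) hc.le
  · rw [← Matrix.mul_assoc, hWP]
    ext i j
    simp only [← Matrix.mul_assoc, smul_apply, mul_diagonal, smul_eq_mul]
    ring
  · rw [transpose_mul, diagonal_transpose, show diagonal s * Pᵀ * D * (P * diagonal s) =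
        diagonal s * (Pᵀ * D * P) * diagonal s by simp only [Matrix.mul_assoc],
      hPDP, diagonal_mul_diagonal, diagonal_mul_diagonal, smul_one_eq_diagonal]
    exact congrArg diagonal (funext hs_sq)
  · change (Vᵀ * V).submatrix Subtype.val Subtype.val = 1
    rw [hV, submatrix_one _ Subtype.val_injective]
  · rw [mul_eq_submatrix_mul_submatrix_of_col_eq_zero Vᵀ (fun k => ν k ≠ 0) hcol,
      Matrix.mul_assoc P, diagonal_mul_diagonal, funext hs_sqrt, diagonal_one, Matrix.mul_one]
    rfl

theorem exists_isPencilFactorization_of_stationary [DecidableEq κ] {c : ℝ} (hc : 0 < c)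
    {W D : Matrix m m ℝ} (hD : D.PosDef) {Y : Matrix m κ ℝ}
    (h : W * Y = c⁻¹ • (D * Y * (Yᵀ * D * Y))) :
    ∃ r ≤ Fintype.card κ, ∃ (U : Matrix m (Fin r) ℝ) (lam : Fin r → ℝ) (Q : Matrix (Fin r) κ ℝ),
      IsPencilFactorization c W D Y U lam Q := by
  have hgram : (Yᵀ * D * Y).PosSemidef := by
    simpa only [conjTranspose_eq_transpose_of_trivial] using
      hD.posSemidef.conjTranspose_mul_mul_same Y
  obtain ⟨V, ν, hν, hVV, hVV', hN⟩ := hgram.exists_orthogonal_diagonalization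
  set Z := Y * V
  have hY : Y = Z * Vᵀ := by rw [Matrix.mul_assoc, hVV', Matrix.mul_one]
  have hZ : Zᵀ * D * Z = diagonal ν := by
    calc Zᵀ * D * Z = Vᵀ * (Yᵀ * D * Y) * V := by simp only [Z, transpose_mul, Matrix.mul_assoc]
      _ = (Vᵀ * V) * diagonal ν * (Vᵀ * V) := by rw [hN]; simp only [Matrix.mul_assoc]
      _ = diagonal ν := by rw [hVV, Matrix.one_mul, Matrix.mul_one]
  have hWZ : W * Z = c⁻¹ • (D * Z * diagonal ν) := by
    calc W * Z = W * Y * V := (Matrix.mul_assoc _ _ _).symm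
      _ = c⁻¹ • (D * Z * diagonal ν * (Vᵀ * V)) := by
          rw [h, hN, Matrix.smul_mul]; simp only [Z, Matrix.mul_assoc]
      _ = c⁻¹ • (D * Z * diagonal ν) := by rw [hVV, Matrix.mul_one]
  obtain ⟨U, lam, Q, hF⟩ := exists_isPencilFactorization_of_diagonalization hc hD hν hVV hZ hWZ
  rw [hY]
  exact ⟨_, Fintype.card_subtype_le _, _, _, _, hF.reindex (Fintype.equivFin _)⟩

end Matrix

theorem stmt_0_general (n K : ℕ) (hn : 0 < n)
    (W D : Matrix (Fin n) (Fin n) ℝ)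
    (hDpos : D.PosDef)
    (Y : Matrix (Fin n) (Fin K) ℝ) :
    W * Y = ((n : ℝ) ^ 2)⁻¹ • (D * Y * (Yᵀ * D * Y)) ↔
      ∃ (r : ℕ) (_ : r ≤ K) (U : Matrix (Fin n) (Fin r) ℝ)
        (lam : Fin r → ℝ) (Q : Matrix (Fin r) (Fin K) ℝ),
        (∀ i, 0 ≤ lam i) ∧
        W * U = D * U * diagonal lam ∧
        Uᵀ * D * U = ((n : ℝ) ^ 2) • (1 : Matrix (Fin r) (Fin r) ℝ) ∧
        Q * Qᵀ = 1 ∧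
        Y = U * diagonal (fun i => Real.sqrt (lam i)) * Q := by
  have hc : (0 : ℝ) < (n : ℝ) ^ 2 := by positivity
  constructor
  · intro h
    obtain ⟨r, hr, U, lam, Q, hF⟩ := exists_isPencilFactorization_of_stationary hc hDpos h
    exact ⟨r, by simpa using hr, U, lam, Q, hF.lam_nonneg, hF.mul_eq, hF.transpose_mul_mul,
      hF.mul_transpose, hF.eq⟩
  · rintro ⟨r, -, U, lam, Q, hlam, hWU, hUDU, hQ, hY⟩
    exact IsPencilFactorization.stationary ⟨hlam, hWU, hUDU, hQ, hY⟩ hc.ne'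

/-- Stationary points of the orthogonalization-free objective are exactly
`Y = U Λ^{1/2} P Q` built from eigenvectors of the pencil `(W, D)`. -/
theorem stmt_0 (n K : ℕ) (hn : 0 < n)
    (W D : Matrix (Fin n) (Fin n) ℝ) (hW : W.IsSymm) (hDdiag : D.IsDiag)
    (hDpos : D.PosDef)
    (Y : Matrix (Fin n) (Fin K) ℝ) :
    W * Y = ((n : ℝ) ^ 2)⁻¹ • (D * Y * (Yᵀ * D * Y)) ↔
      ∃ (r : ℕ) (_ : r ≤ K) (U : Matrix (Fin n) (Fin r) ℝ)
        (lam : Fin r → ℝ) (Q : Matrix (Fin r) (Fin K) ℝ),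
        (∀ i, 0 ≤ lam i) ∧
        W * U = D * U * diagonal lam ∧
        Uᵀ * D * U = ((n : ℝ) ^ 2) • (1 : Matrix (Fin r) (Fin r) ℝ) ∧
        Q * Qᵀ = 1 ∧
        Y = U * diagonal (fun i => Real.sqrt (lam i)) * Q :=
  stmt_0_general n K hn W D hDpos Y
end

section
/- Let W be symmetric and D diagonal positive definite such that the pencil (W,D) has at least K positive eigenvalues and a nonzero eigengap between the K-th and (K+1)-th eigenvalues. If a stationary point Y₀ of f(Y) = trace(-2Yᵀ(W/n)Y + Yᵀ(D/n)YYᵀ(D/n)Y) satisfies Y₀ᵀDUᵢ = 0 for some eigenvector Uᵢ of (W,D) with index i ≤ K (i.e., Y₀ omits a leading eigenvector), then Y₀ is a strict saddle point: there exists a direction S₀ with Sᵀ∇²f(Y₀)S < 0. -/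
/-!
Let `M = Yᵀ D Y` and let `A = U D Y` be the matrix whose rows are `Yᵀ D uⱼ`. Stationarity
`W Y = D Y M` turns the eigen-equations `W uⱼ = λⱼ D uⱼ` into `A M = diag(λ) A`, so every
nonzero row of `A` is a left eigenvector of `M`. Along the direction `S = uᵢ cᵀ` the cross terms
of the Hessian vanish because `Yᵀ D uᵢ = 0`, leaving `4 (cᵀ M c - λᵢ |c|²)`. A suitable `c`
exists: either some row `j ≥ K` of `A` is nonzero, and it is an eigenvector of `M` with
eigenvalue `λⱼ < λᵢ`; or only the rows `j < K, j ≠ i` can be nonzero, so `A` has rank `< K`,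
and any `c ≠ 0` in its kernel satisfies `D Y c = 0` (the `uⱼ` form a basis), hence `cᵀ M c = 0`.
-/

open Matrix

/-- `Sᵀ ∇²f(Y) S` for `f(Y) = tr(-2 Yᵀ W Y + Yᵀ D Y Yᵀ D Y)`. -/
def hessianQuadForm {m k : Type*} [Fintype m] [Fintype k] (W D : Matrix m m ℝ)
    (Y S : Matrix m k ℝ) : ℝ :=
  -4 * trace (Sᵀ * W * S) + 4 * trace (Sᵀ * D * S * (Yᵀ * D * Y))
    + 4 * trace (Sᵀ * D * Y * (Sᵀ * D * Y)) + 4 * trace (Sᵀ * D * Y * (Yᵀ * D * S))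

namespace Matrix

theorem IsSymm.vecMul_eq_mulVec {n α : Type*} [Fintype n] [CommSemiring α]
    {A : Matrix n n α} (hA : A.IsSymm) (x : n → α) : x ᵥ* A = A *ᵥ x := by
  rw [← vecMul_transpose, hA.eq]

theorem mul_mul_transpose_apply {l m n α : Type*} [Fintype m] [Fintype n] [CommSemiring α]
    (A : Matrix l m α) (B : Matrix m n α) (C : Matrix l n α) (i j : l) :
    (A * B * Cᵀ) i j = A i ⬝ᵥ B *ᵥ C j := by
  rw [mul_apply', dotProduct_mulVec]
  rfl

theorem exists_mulVec_eq_zero_of_rank_lt {m n 𝕜 : Type*} [Fintype m] [Fintype n] [Field 𝕜]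
    (A : Matrix m n 𝕜) (h : A.rank < Fintype.card n) : ∃ v ≠ 0, A *ᵥ v = 0 := by
  by_contra! hinj
  have hker : LinearMap.ker A.mulVecLin = ⊥ :=
    ker_mulVecLin_eq_bot_iff.mpr fun v hv => by_contra fun hv0 => hinj v hv0 hv
  have := A.mulVecLin.finrank_range_add_finrank_ker
  rw [hker, finrank_bot, Module.finrank_fintype_fun_eq_card] at this
  exact h.ne this

theorem exists_mulVec_eq_zero_of_rows_eq_zero {n K : ℕ} {𝕜 : Type*} [Field 𝕜]
    (A : Matrix (Fin n) (Fin K) 𝕜) (i : Fin n) (hi : (i : ℕ) < K) (hAi : A i = 0)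
    (htail : ∀ j : Fin n, K ≤ (j : ℕ) → A j = 0) : ∃ v ≠ 0, A *ᵥ v = 0 := by
  classical
  set s : Finset (Fin n) := ({j | (j : ℕ) < K} : Finset (Fin n)).erase i
  have hsupp : Function.support A.row ⊆ s := fun j (hAj : A j ≠ 0) =>
    Finset.mem_coe.mpr <| Finset.mem_erase.mpr ⟨fun hji => hAj (hji ▸ hAi),
      Finset.mem_filter.mpr ⟨Finset.mem_univ _, not_le.mp fun hj => hAj (htail j hj)⟩⟩
  have hcard : s.card < K := by
    have hmem : i ∈ ({j | (j : ℕ) < K} : Finset (Fin n)) := by simpa using hi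
    rw [Finset.card_erase_of_mem hmem, Fin.card_filter_val_lt]
    omega
  refine A.exists_mulVec_eq_zero_of_rank_lt ?_
  rw [Fintype.card_fin]
  exact (A.rank_le_card_of_support_subset s hsupp).trans_lt hcard

end Matrix

theorem hessianQuadForm_vecMulVec {m k : Type*} [Fintype m] [Fintype k] (W D : Matrix m m ℝ)
    (Y : Matrix m k ℝ) (u : m → ℝ) (c : k → ℝ) (hu : u ᵥ* D ᵥ* Y = 0) :
    hessianQuadForm W D Y (vecMulVec u c)
      = 4 * ((u ⬝ᵥ D *ᵥ u) * (c ⬝ᵥ (Yᵀ * D * Y) *ᵥ c) - (u ⬝ᵥ W *ᵥ u) * (c ⬝ᵥ c)) := by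
  have hsandwich : ∀ X : Matrix m m ℝ,
      (vecMulVec u c)ᵀ * X * vecMulVec u c = vecMulVec c ((u ⬝ᵥ X *ᵥ u) • c) := by
    intro X
    rw [transpose_vecMulVec, vecMulVec_mul, vecMulVec_mul_vecMulVec, dotProduct_mulVec]
  have hcross : (vecMulVec u c)ᵀ * D * Y = 0 := by
    rw [transpose_vecMulVec, vecMulVec_mul, vecMulVec_mul, hu, vecMulVec_zero]
  simp only [hessianQuadForm, hsandwich, hcross, Matrix.zero_mul, trace_zero, vecMulVec_mul,
    trace_vecMulVec, smul_vecMul, dotProduct_smul, smul_eq_mul, dotProduct_mulVec c]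
  rw [dotProduct_comm (c ᵥ* _)]
  ring

theorem exists_dotProduct_mulVec_lt {n K : ℕ} (A : Matrix (Fin n) (Fin K) ℝ)
    (M : Matrix (Fin K) (Fin K) ℝ) (lam : Fin n → ℝ) (hAM : A * M = diagonal lam * A)
    (hker : ∀ v, A *ᵥ v = 0 → M *ᵥ v = 0) (i : Fin n) (hi : (i : ℕ) < K) (hAi : A i = 0)
    (hpos : 0 < lam i) (hgap : ∀ j : Fin n, K ≤ (j : ℕ) → lam j < lam i) :
    ∃ c, c ⬝ᵥ M *ᵥ c < lam i * (c ⬝ᵥ c) := by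
  by_cases htail : ∀ j : Fin n, K ≤ (j : ℕ) → A j = 0
  · obtain ⟨c, hc, hAc⟩ := A.exists_mulVec_eq_zero_of_rows_eq_zero i hi hAi htail
    refine ⟨c, ?_⟩
    rw [hker c hAc, dotProduct_zero]
    exact mul_pos hpos (dotProduct_self_star_pos_iff.mpr hc)
  · push Not at htail
    obtain ⟨j, hj, hAj⟩ := htail
    have hrow : A j ᵥ* M = lam j • A j := by
      rw [← mul_apply_eq_vecMul, hAM]
      ext
      simp [diagonal_mul]
    refine ⟨A j, ?_⟩
    rw [dotProduct_mulVec, hrow, smul_dotProduct, smul_eq_mul]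
    exact mul_lt_mul_of_pos_right (hgap j hj) (dotProduct_self_star_pos_iff.mpr hAj)

theorem exists_hessianQuadForm_neg {n K : ℕ} (W D U : Matrix (Fin n) (Fin n) ℝ)
    (hW : W.IsSymm) (hD : D.IsSymm) (lam : Fin n → ℝ)
    (hEig : ∀ j, W *ᵥ U j = lam j • D *ᵥ U j) (hOrth : U * D * Uᵀ = 1)
    (Y : Matrix (Fin n) (Fin K) ℝ) (hstat : W * Y = D * Y * (Yᵀ * D * Y))
    (i : Fin n) (hi : (i : ℕ) < K) (hpos : 0 < lam i)
    (hgap : ∀ j : Fin n, K ≤ (j : ℕ) → lam j < lam i) (homit : Yᵀ *ᵥ (D *ᵥ U i) = 0) :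
    ∃ S, hessianQuadForm W D Y S < 0 := by
  set M := Yᵀ * D * Y
  have hUW : U * W = diagonal lam * (U * D) := by
    ext j l
    rw [mul_apply_eq_vecMul, hW.vecMul_eq_mulVec, hEig, diagonal_mul, mul_apply_eq_vecMul,
      hD.vecMul_eq_mulVec, Pi.smul_apply, smul_eq_mul]
  have hAM : U * D * Y * M = diagonal lam * (U * D * Y) := calc
    U * D * Y * M = U * (D * Y * M) := by simp only [Matrix.mul_assoc]
    _ = U * W * Y := by rw [← hstat, Matrix.mul_assoc]
    _ = diagonal lam * (U * D * Y) := by rw [hUW]; simp only [Matrix.mul_assoc]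
  have hU : IsUnit U := (isUnit_iff_isUnit_det U).mpr (isUnit_det_of_right_inverse
    ((Matrix.mul_assoc U D Uᵀ).symm.trans hOrth))
  have hker : ∀ v, (U * D * Y) *ᵥ v = 0 → M *ᵥ v = 0 := by
    intro v hv
    rw [← mulVec_mulVec, ← mulVec_mulVec, ← mulVec_zero U] at hv
    rw [← mulVec_mulVec, ← mulVec_mulVec, mulVec_injective_of_isUnit hU hv, mulVec_zero]
  have hui : U i ᵥ* D ᵥ* Y = 0 := by
    rw [hD.vecMul_eq_mulVec, ← mulVec_transpose, homit]
  obtain ⟨c, hc⟩ := exists_dotProduct_mulVec_lt (U * D * Y) M lam hAM hker i hi hui hpos hgap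
  have hDu : U i ⬝ᵥ D *ᵥ U i = 1 := by
    rw [← mul_mul_transpose_apply, hOrth, one_apply_eq]
  refine ⟨vecMulVec (U i) c, ?_⟩
  rw [hessianQuadForm_vecMulVec W D Y _ c hui, hEig, dotProduct_smul, smul_eq_mul, hDu]
  linarith

theorem stmt_1_general (n K : ℕ)
    (W D : Matrix (Fin n) (Fin n) ℝ) (hW : W.IsSymm) (hDdiag : D.IsDiag)
    (lam : Fin n → ℝ) (Ucol : Fin n → Fin n → ℝ)
    (hEig : ∀ j, W *ᵥ Ucol j = lam j • (D *ᵥ Ucol j))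
    (hOrth : ∀ j l, Ucol j ⬝ᵥ (D *ᵥ Ucol l) = if j = l then (n : ℝ) else 0)
    (hpos : ∀ i : Fin n, (i : ℕ) < K → 0 < lam i)
    (hgap : ∀ i j : Fin n, (i : ℕ) < K → K ≤ (j : ℕ) → lam j < lam i)
    (Y₀ : Matrix (Fin n) (Fin K) ℝ)
    (hstat : ((n : ℝ)⁻¹ • W) * Y₀
      = ((n : ℝ)⁻¹ • D) * Y₀ * (Y₀ᵀ * (((n : ℝ)⁻¹ • D)) * Y₀))
    (homit : ∃ i : Fin n, (i : ℕ) < K ∧ Y₀ᵀ *ᵥ (D *ᵥ Ucol i) = 0) :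
    ∃ S : Matrix (Fin n) (Fin K) ℝ,
      -4 * trace (Sᵀ * ((n : ℝ)⁻¹ • W) * S)
        + 4 * trace (Sᵀ * ((n : ℝ)⁻¹ • D) * S * (Y₀ᵀ * ((n : ℝ)⁻¹ • D) * Y₀))
        + 4 * trace (Sᵀ * ((n : ℝ)⁻¹ • D) * Y₀ * (Sᵀ * ((n : ℝ)⁻¹ • D) * Y₀))
        + 4 * trace (Sᵀ * ((n : ℝ)⁻¹ • D) * Y₀ * (Y₀ᵀ * ((n : ℝ)⁻¹ • D) * S)) < 0 := by
  obtain ⟨i, hi, homit⟩ := homit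
  set U : Matrix (Fin n) (Fin n) ℝ := Ucol
  have hn : (n : ℝ) ≠ 0 := Nat.cast_ne_zero.mpr i.pos.ne'
  refine exists_hessianQuadForm_neg _ _ U (hW.smul _) (hDdiag.isSymm.smul _) lam ?_ ?_ Y₀
    hstat i hi (hpos i hi) (hgap i · hi) ?_
  · intro j
    rw [smul_mulVec, smul_mulVec, hEig, smul_comm]
  · ext j l
    rw [mul_mul_transpose_apply, smul_mulVec, dotProduct_smul, hOrth, one_apply, smul_eq_mul]
    split_ifs
    · exact inv_mul_cancel₀ hn
    · exact mul_zero _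
  · rw [smul_mulVec, mulVec_smul, homit, smul_zero]

/-- A stationary point that omits one of the leading `K` eigenvectors of the
pencil `(W, D)` is a strict saddle point of the orthogonalization-free objective. -/
theorem stmt_1 (n K : ℕ) (hn : 0 < n) (hKn : K < n)
    (W D : Matrix (Fin n) (Fin n) ℝ) (hW : W.IsSymm) (hDdiag : D.IsDiag)
    (hDpos : D.PosDef)
    (lam : Fin n → ℝ) (Ucol : Fin n → Fin n → ℝ)
    (hEig : ∀ j, W *ᵥ Ucol j = lam j • (D *ᵥ Ucol j))
    (hOrth : ∀ j l, Ucol j ⬝ᵥ (D *ᵥ Ucol l) = if j = l then (n : ℝ) else 0)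
    (hsort : ∀ i j : Fin n, i ≤ j → lam j ≤ lam i)
    (hpos : ∀ i : Fin n, (i : ℕ) < K → 0 < lam i)
    (hgap : ∀ i j : Fin n, (i : ℕ) < K → K ≤ (j : ℕ) → lam j < lam i)
    (Y₀ : Matrix (Fin n) (Fin K) ℝ)
    (hstat : ((n : ℝ)⁻¹ • W) * Y₀
      = ((n : ℝ)⁻¹ • D) * Y₀ * (Y₀ᵀ * (((n : ℝ)⁻¹ • D)) * Y₀))
    (homit : ∃ i : Fin n, (i : ℕ) < K ∧ Y₀ᵀ *ᵥ (D *ᵥ Ucol i) = 0) :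
    ∃ S : Matrix (Fin n) (Fin K) ℝ,
      -4 * trace (Sᵀ * ((n : ℝ)⁻¹ • W) * S)
        + 4 * trace (Sᵀ * ((n : ℝ)⁻¹ • D) * S * (Y₀ᵀ * ((n : ℝ)⁻¹ • D) * Y₀))
        + 4 * trace (Sᵀ * ((n : ℝ)⁻¹ • D) * Y₀ * (Sᵀ * ((n : ℝ)⁻¹ • D) * Y₀))
        + 4 * trace (Sᵀ * ((n : ℝ)⁻¹ • D) * Y₀ * (Y₀ᵀ * ((n : ℝ)⁻¹ • D) * S)) < 0 :=
  stmt_1_general n K W D hW hDdiag lam Ucol hEig hOrth hpos hgap Y₀ hstat homit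
end

section
/- Let W be symmetric and D diagonal positive definite, with the pencil (W,D) having at least K positive eigenvalues and λ_K > λ_{K+1}. Then every local minimizer of f(Y) = (1/n²)trace(-2YᵀWY + (1/n²)YᵀDYYᵀDY) over Y ∈ ℝ^{n×K} has the form Y* = U_K Λ_K^{1/2} Q, where Λ_K is the diagonal matrix of the K largest eigenvalues of (W,D), U_K the corresponding eigenvector matrix with U_KᵀDU_K = n²I, and Q an arbitrary K×K orthogonal matrix. -/
/-!
In the coordinates `Y = U Z` of the generalized eigenbasis the objective becomes
`tr((ZᵀZ)²) - 2 tr(ZᵀΛZ) = ‖Z Zᵀ - Λ‖² - ‖Λ‖²`, so it suffices to study the diagonal problem.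
At a local minimum the first-order condition `ΛZ = Z (ZᵀZ)` makes each row of `Z` an eigenvector
of `ZᵀZ` for the matching eigenvalue of `Λ`; by the spectral gap the top `K` rows `Z₁` are then
orthogonal to the remaining rows `Z₂`. Along the rank-one directions `v wᵀ` with `vᵀZ = 0` the
second-order condition reads `|w|² vᵀΛv ≤ |v|² |Z w|²`. If `Z₁` were singular, a top vector `v`
with `vᵀZ₁ = 0` would first force `Z₂ = 0` (test `w` on the rows of `Z₂`, where `vᵀΛv` beats the
lower eigenvalues), after which the inequality fails for a kernel vector `w` of `Z₁`. So `Z₁` is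
invertible, hence `Z₂ = 0`, and the first-order condition gives `Z₁ Z₁ᵀ = Λ_K`, i.e.
`Z₁ = Λ_K^{1/2} Q` with `Q` orthogonal.
-/

open Matrix Filter Topology

theorem quartic_coeffs_of_eventually_le {a c₁ c₂ c₃ c₄ : ℝ}
    (h : ∀ᶠ t in 𝓝 (0 : ℝ), a ≤ a + c₁ * t + c₂ * t ^ 2 + c₃ * t ^ 3 + c₄ * t ^ 4) :
    c₁ = 0 ∧ 0 ≤ c₂ := by
  have limit_nonneg (l : Filter ℝ) [l.NeBot] (hl : l ≤ 𝓝 0) (q : ℝ → ℝ) (hq : Continuous q)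
      (hq' : ∀ᶠ t in l, 0 ≤ q t) : 0 ≤ q 0 :=
    ge_of_tendsto ((hq.tendsto 0).mono_left hl) hq'
  have right : 0 ≤ c₁ + c₂ * 0 + c₃ * 0 ^ 2 + c₄ * 0 ^ 3 :=
    limit_nonneg (𝓝[>] 0) nhdsWithin_le_nhds
      (fun t => c₁ + c₂ * t + c₃ * t ^ 2 + c₄ * t ^ 3) (by fun_prop) <| by
        filter_upwards [nhdsWithin_le_nhds h, self_mem_nhdsWithin] with t ht (htpos : 0 < t)
        nlinarith
  have left : 0 ≤ -(c₁ + c₂ * 0 + c₃ * 0 ^ 2 + c₄ * 0 ^ 3) :=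
    limit_nonneg (𝓝[<] 0) nhdsWithin_le_nhds
      (fun t => -(c₁ + c₂ * t + c₃ * t ^ 2 + c₄ * t ^ 3)) (by fun_prop) <| by
        filter_upwards [nhdsWithin_le_nhds h, self_mem_nhdsWithin] with t ht (htneg : t < 0)
        nlinarith
  have hc₁ : c₁ = 0 := by norm_num at right left; linarith
  subst hc₁
  have second : 0 ≤ c₂ + c₃ * 0 + c₄ * 0 ^ 2 :=
    limit_nonneg (𝓝[≠] 0) nhdsWithin_le_nhds
      (fun t => c₂ + c₃ * t + c₄ * t ^ 2) (by fun_prop) <| by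
        filter_upwards [nhdsWithin_le_nhds h, self_mem_nhdsWithin] with t ht (ht0 : t ≠ 0)
        have : 0 < t ^ 2 := by positivity
        nlinarith
  norm_num at second
  exact ⟨rfl, second⟩

section Expansion

variable {ι κ R : Type*} [Fintype ι] [CommRing R]

theorem transpose_add_smul_mul_add_smul (Z V : Matrix ι κ R) (t : R) :
    (Z + t • V)ᵀ * (Z + t • V) = Zᵀ * Z + t • (Zᵀ * V + Vᵀ * Z) + t ^ 2 • (Vᵀ * V) := by
  simp only [transpose_add, transpose_smul, Matrix.add_mul, Matrix.mul_add, Matrix.smul_mul,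
    Matrix.mul_smul, smul_add, smul_smul, sq]
  abel

theorem transpose_add_smul_mul_mul_add_smul (A : Matrix ι ι R) (Z V : Matrix ι κ R) (t : R) :
    (Z + t • V)ᵀ * A * (Z + t • V)
      = Zᵀ * A * Z + t • (Zᵀ * A * V + Vᵀ * A * Z) + t ^ 2 • (Vᵀ * A * V) := by
  simp only [transpose_add, transpose_smul, Matrix.add_mul, Matrix.mul_add, Matrix.smul_mul,
    Matrix.mul_smul, smul_add, smul_smul, sq]
  abel

theorem trace_mul_self_add_smul_add_smul (P Q S : Matrix ι ι R) (t : R) :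
    trace ((P + t • Q + t ^ 2 • S) * (P + t • Q + t ^ 2 • S))
      = trace (P * P) + 2 * trace (P * Q) * t + (2 * trace (P * S) + trace (Q * Q)) * t ^ 2
        + 2 * trace (Q * S) * t ^ 3 + trace (S * S) * t ^ 4 := by
  simp only [Matrix.add_mul, Matrix.mul_add, Matrix.smul_mul, Matrix.mul_smul, trace_add,
    trace_smul, smul_eq_mul, trace_mul_comm Q P, trace_mul_comm S P, trace_mul_comm S Q]
  ring

end Expansion

section ReducedObjective

variable {ι κ : Type*} [Fintype ι] [Fintype κ] {A : Matrix ι ι ℝ} {Z : Matrix ι κ ℝ}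

def reducedObjective (A : Matrix ι ι ℝ) (Z : Matrix ι κ ℝ) : ℝ :=
  trace (Zᵀ * Z * (Zᵀ * Z)) - 2 * trace (Zᵀ * A * Z)

theorem reducedObjective_add_smul (hA : Aᵀ = A) (Z V : Matrix ι κ ℝ) (t : ℝ) :
    reducedObjective A (Z + t • V) = reducedObjective A Z
      + 4 * trace (Vᵀ * (Z * (Zᵀ * Z) - A * Z)) * t
      + (2 * trace (Zᵀ * Z * (Vᵀ * V)) + trace ((Zᵀ * V + Vᵀ * Z) * (Zᵀ * V + Vᵀ * Z))
          - 2 * trace (Vᵀ * A * V)) * t ^ 2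
      + 2 * trace ((Zᵀ * V + Vᵀ * Z) * (Vᵀ * V)) * t ^ 3
      + trace (Vᵀ * V * (Vᵀ * V)) * t ^ 4 := by
  have hZAV : trace (Zᵀ * (A * V)) = trace (Vᵀ * (A * Z)) := by
    rw [← trace_transpose]; simp [Matrix.mul_assoc, hA]
  have hZZZV : trace (Zᵀ * (Z * (Zᵀ * V))) = trace (Vᵀ * (Z * (Zᵀ * Z))) := by
    rw [← trace_transpose]; simp [Matrix.mul_assoc]
  have hZZVZ : trace (Zᵀ * (Z * (Vᵀ * Z))) = trace (Vᵀ * (Z * (Zᵀ * Z))) := by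
    rw [← Matrix.mul_assoc, trace_mul_comm]; simp [Matrix.mul_assoc]
  rw [reducedObjective, reducedObjective, transpose_add_smul_mul_add_smul,
    transpose_add_smul_mul_mul_add_smul, trace_mul_self_add_smul_add_smul]
  simp only [trace_add, trace_smul, smul_eq_mul, Matrix.mul_add, Matrix.mul_sub, trace_sub,
    Matrix.mul_assoc]
  rw [hZAV, hZZZV, hZZVZ]
  ring

theorem IsLocalMin.reducedObjective_optimality (hA : Aᵀ = A)
    (h : IsLocalMin (reducedObjective A) Z) (V : Matrix ι κ ℝ) :
    trace (Vᵀ * (Z * (Zᵀ * Z) - A * Z)) = 0 ∧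
      0 ≤ 2 * trace (Zᵀ * Z * (Vᵀ * V)) + trace ((Zᵀ * V + Vᵀ * Z) * (Zᵀ * V + Vᵀ * Z))
        - 2 * trace (Vᵀ * A * V) := by
  have hline := ((by fun_prop : Continuous fun t : ℝ => Z + t • V).tendsto' 0 Z
    (by simp)).eventually h
  simp only [reducedObjective_add_smul hA] at hline
  obtain ⟨hfirst, hsecond⟩ := quartic_coeffs_of_eventually_le hline
  exact ⟨by linarith, hsecond⟩

theorem IsLocalMin.mul_eq_mul_gram (hA : Aᵀ = A) (h : IsLocalMin (reducedObjective A) Z) :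
    A * Z = Z * (Zᵀ * Z) := by
  have hG := (h.reducedObjective_optimality hA (Z * (Zᵀ * Z) - A * Z)).1
  rw [← conjTranspose_eq_transpose_of_trivial, trace_conjTranspose_mul_self_eq_zero_iff,
    sub_eq_zero] at hG
  exact hG.symm

theorem IsLocalMin.trace_le_of_transpose_mul_eq_zero (hA : Aᵀ = A)
    (h : IsLocalMin (reducedObjective A) Z) {V : Matrix ι κ ℝ} (hV : Zᵀ * V = 0) :
    trace (Vᵀ * A * V) ≤ trace (Zᵀ * Z * (Vᵀ * V)) := by
  have hV' : Vᵀ * Z = 0 := by simpa using congrArg transpose hV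
  have hsecond := (h.reducedObjective_optimality hA V).2
  rw [hV, hV', add_zero, Matrix.zero_mul, trace_zero] at hsecond
  linarith

theorem IsLocalMin.dotProduct_mul_le_of_vecMul_eq_zero (hA : Aᵀ = A)
    (h : IsLocalMin (reducedObjective A) Z) {v : ι → ℝ} (hv : v ᵥ* Z = 0) (w : κ → ℝ) :
    (v ⬝ᵥ A *ᵥ v) * (w ⬝ᵥ w) ≤ (v ⬝ᵥ v) * (w ⬝ᵥ (Zᵀ * Z) *ᵥ w) := by
  have hV : Zᵀ * vecMulVec v w = 0 := by
    rw [mul_vecMulVec, mulVec_transpose, hv, zero_vecMulVec]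
  have hle := h.trace_le_of_transpose_mul_eq_zero hA hV
  rwa [transpose_vecMulVec, Matrix.mul_assoc, mul_vecMulVec, vecMulVec_mul_vecMulVec,
    vecMulVec_mul_vecMulVec, mul_vecMulVec, trace_vecMulVec, trace_vecMulVec, dotProduct_smul,
    dotProduct_smul, smul_eq_mul, smul_eq_mul, dotProduct_comm ((Zᵀ * Z) *ᵥ w)] at hle

end ReducedObjective

theorem transpose_fromRows_mul_fromRows {m₁ m₂ n R : Type*} [Fintype m₁] [Fintype m₂]
    [Semiring R] (A₁ : Matrix m₁ n R) (A₂ : Matrix m₂ n R) :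
    (fromRows A₁ A₂)ᵀ * fromRows A₁ A₂ = A₁ᵀ * A₁ + A₂ᵀ * A₂ := by
  rw [transpose_fromRows, fromCols_mul_fromRows]

theorem eq_zero_of_diagonal_mul_eq_mul_diagonal {m n R : Type*} [Fintype m] [Fintype n]
    [DecidableEq m] [DecidableEq n] [CommRing R] [NoZeroDivisors R] {a : m → R} {b : n → R}
    {N : Matrix m n R} (h : diagonal a * N = N * diagonal b) (hab : ∀ i j, a i ≠ b j) :
    N = 0 := by
  ext i j
  have hij : a i * N i j = N i j * b j := by simpa using congrFun (congrFun h i) j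
  have : (a i - b j) * N i j = 0 := by linear_combination hij
  exact (mul_eq_zero.mp this).resolve_left (sub_ne_zero.mpr (hab i j))

theorem mul_dotProduct_self_lt_dotProduct_diagonal_mulVec {κ : Type*} [Fintype κ]
    [DecidableEq κ] {a : κ → ℝ} {μ : ℝ} (h : ∀ i, μ < a i) {v : κ → ℝ} (hv : v ≠ 0) :
    μ * (v ⬝ᵥ v) < v ⬝ᵥ diagonal a *ᵥ v := by
  obtain ⟨i, hi⟩ := Function.ne_iff.mp hv
  simp only [dotProduct, mulVec_diagonal, Finset.mul_sum]
  refine Finset.sum_lt_sum (fun j _ => ?_) ⟨i, Finset.mem_univ _, ?_⟩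
  · nlinarith [h j, mul_self_nonneg (v j)]
  · nlinarith [h i, mul_self_pos.mpr hi]

theorem exists_orthogonal_of_mul_transpose_eq_diagonal {κ : Type*} [Fintype κ] [DecidableEq κ]
    {d : κ → ℝ} (hd : ∀ i, 0 < d i) {X : Matrix κ κ ℝ} (hX : X * Xᵀ = diagonal d) :
    ∃ Q : Matrix κ κ ℝ, Qᵀ * Q = 1 ∧ Q * Qᵀ = 1 ∧ X = diagonal (fun i => √(d i)) * Q := by
  have hsqrt : ∀ i, √(d i) ≠ 0 := fun i => (Real.sqrt_pos.mpr (hd i)).ne'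
  set Q := diagonal (fun i => (√(d i))⁻¹) * X
  have hQ : Q * Qᵀ = 1 := by
    rw [transpose_mul, diagonal_transpose, Matrix.mul_assoc, ← Matrix.mul_assoc X, hX,
      diagonal_mul_diagonal, diagonal_mul_diagonal, ← diagonal_one]
    congr 1
    funext i
    field_simp [hsqrt i]
    rw [Real.sq_sqrt (hd i).le]
  refine ⟨Q, mul_eq_one_comm.mp hQ, hQ, ?_⟩
  simp [Q, ← Matrix.mul_assoc, hsqrt]

section Blocks

variable {κ ρ : Type*} [Fintype κ] [Fintype ρ] [DecidableEq κ] [DecidableEq ρ]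
  {a : κ → ℝ} {b : ρ → ℝ} {Z₁ : Matrix κ κ ℝ} {Z₂ : Matrix ρ κ ℝ}

theorem IsLocalMin.diagonal_mul_eq_mul_gram_fromRows
    (h : IsLocalMin (reducedObjective (diagonal (Sum.elim a b))) (fromRows Z₁ Z₂)) :
    diagonal a * Z₁ = Z₁ * (Z₁ᵀ * Z₁ + Z₂ᵀ * Z₂) ∧
      diagonal b * Z₂ = Z₂ * (Z₁ᵀ * Z₁ + Z₂ᵀ * Z₂) := by
  have h₁ := h.mul_eq_mul_gram (by simp)
  rw [← fromBlocks_diagonal, fromBlocks_mul_fromRows, transpose_fromRows_mul_fromRows,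
    fromRows_mul] at h₁
  simpa using fromRows_inj h₁

theorem IsLocalMin.dotProduct_mul_le_of_vecMul_top_eq_zero
    (h : IsLocalMin (reducedObjective (diagonal (Sum.elim a b))) (fromRows Z₁ Z₂))
    {v : κ → ℝ} (hv : v ᵥ* Z₁ = 0) (w : κ → ℝ) :
    (v ⬝ᵥ diagonal a *ᵥ v) * (w ⬝ᵥ w) ≤ (v ⬝ᵥ v) * (w ⬝ᵥ (Z₁ᵀ * Z₁ + Z₂ᵀ * Z₂) *ᵥ w) := by
  have hle := h.dotProduct_mul_le_of_vecMul_eq_zero (by simp) (v := Sum.elim v 0)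
    (by rw [sumElim_vecMul_fromRows, hv, zero_vecMul, add_zero]) w
  have hquad : Sum.elim v 0 ⬝ᵥ diagonal (Sum.elim a b) *ᵥ Sum.elim v 0
      = v ⬝ᵥ diagonal a *ᵥ v := by
    simp [dotProduct, mulVec_diagonal, Fintype.sum_sum_type]
  rwa [transpose_fromRows_mul_fromRows, sumElim_dotProduct_sumElim, hquad, dotProduct_zero,
    add_zero] at hle

theorem IsLocalMin.bottom_eq_zero_of_vecMul_top_eq_zero
    (h : IsLocalMin (reducedObjective (diagonal (Sum.elim a b))) (fromRows Z₁ Z₂))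
    (hab : ∀ i j, b j < a i) {v : κ → ℝ} (hv0 : v ≠ 0) (hv : v ᵥ* Z₁ = 0) : Z₂ = 0 := by
  have hgram_symm : (Z₁ᵀ * Z₁ + Z₂ᵀ * Z₂)ᵀ = Z₁ᵀ * Z₁ + Z₂ᵀ * Z₂ := by simp [transpose_add]
  ext j k
  suffices hrow : Z₂ j = 0 from congrFun hrow k
  have heig : (Z₁ᵀ * Z₁ + Z₂ᵀ * Z₂) *ᵥ Z₂ j = b j • Z₂ j := by
    rw [← hgram_symm, mulVec_transpose, ← mul_apply_eq_vecMul,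
      ← h.diagonal_mul_eq_mul_gram_fromRows.2]
    ext k
    simp [diagonal_mul]
  have hle := h.dotProduct_mul_le_of_vecMul_top_eq_zero hv (Z₂ j)
  rw [heig, dotProduct_smul, smul_eq_mul] at hle
  have hlt := mul_dotProduct_self_lt_dotProduct_diagonal_mulVec (fun i => hab i j) hv0
  have hnonneg : 0 ≤ Z₂ j ⬝ᵥ Z₂ j := Fintype.sum_nonneg fun k => mul_self_nonneg _
  exact dotProduct_self_eq_zero.mp (by nlinarith)

theorem IsLocalMin.isUnit_top
    (h : IsLocalMin (reducedObjective (diagonal (Sum.elim a b))) (fromRows Z₁ Z₂))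
    (ha : ∀ i, 0 < a i) (hab : ∀ i j, b j < a i) : IsUnit Z₁ := by
  by_contra hZ₁
  have hdet : Z₁.det = 0 := by
    rwa [isUnit_iff_isUnit_det, isUnit_iff_ne_zero, not_not] at hZ₁
  obtain ⟨v, hv0, hv⟩ := exists_vecMul_eq_zero_iff.mpr hdet
  obtain ⟨u, hu0, hu⟩ := exists_mulVec_eq_zero_iff.mpr hdet
  have hle := h.dotProduct_mul_le_of_vecMul_top_eq_zero hv u
  rw [h.bottom_eq_zero_of_vecMul_top_eq_zero hab hv0 hv, Matrix.mul_zero, add_zero,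
    ← mulVec_mulVec, hu, mulVec_zero, dotProduct_zero, mul_zero] at hle
  have hquad_pos := mul_dotProduct_self_lt_dotProduct_diagonal_mulVec ha hv0
  have hu_pos : 0 < u ⬝ᵥ u := lt_of_le_of_ne (Fintype.sum_nonneg fun k => mul_self_nonneg _)
    (Ne.symm (dotProduct_self_eq_zero.not.mpr hu0))
  nlinarith

theorem IsLocalMin.bottom_eq_zero_and_top_mul_transpose_eq_diagonal
    (h : IsLocalMin (reducedObjective (diagonal (Sum.elim a b))) (fromRows Z₁ Z₂))
    (ha : ∀ i, 0 < a i) (hab : ∀ i j, b j < a i) : Z₂ = 0 ∧ Z₁ * Z₁ᵀ = diagonal a := by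
  have hdet : IsUnit Z₁.det := (isUnit_iff_isUnit_det _).mp (h.isUnit_top ha hab)
  obtain ⟨htop, hbot⟩ := h.diagonal_mul_eq_mul_gram_fromRows
  have hcross : Z₁ * Z₂ᵀ = 0 := by
    refine eq_zero_of_diagonal_mul_eq_mul_diagonal (a := a) (b := b) ?_ fun i j => (hab i j).ne'
    calc diagonal a * (Z₁ * Z₂ᵀ) = Z₁ * ((Z₁ᵀ * Z₁ + Z₂ᵀ * Z₂) * Z₂ᵀ) := by
          rw [← Matrix.mul_assoc, htop, Matrix.mul_assoc]
      _ = Z₁ * (diagonal b * Z₂)ᵀ := by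
          rw [hbot, transpose_mul]
          simp [transpose_add]
      _ = Z₁ * Z₂ᵀ * diagonal b := by
          rw [transpose_mul, diagonal_transpose, Matrix.mul_assoc]
  have hZ₂ : Z₂ = 0 := by
    rw [← transpose_transpose Z₂, ← nonsing_inv_mul_cancel_left Z₁ Z₂ᵀ hdet, hcross,
      Matrix.mul_zero, transpose_zero]
  refine ⟨hZ₂, ?_⟩
  rw [hZ₂, Matrix.mul_zero, add_zero, ← Matrix.mul_assoc] at htop
  rw [← mul_nonsing_inv_cancel_right Z₁ (Z₁ * Z₁ᵀ) hdet, ← htop,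
    mul_nonsing_inv_cancel_right _ _ hdet]

end Blocks

section ChangeOfVariables

variable {ι κ ρ : Type*} [Fintype ι] [Fintype κ] [Fintype ρ] [DecidableEq ρ]
  {W D : Matrix ι ι ℝ} {c : ℝ}

noncomputable def orthFreeObjective (W D : Matrix ι ι ℝ) (c : ℝ) (Y : Matrix ι κ ℝ) : ℝ :=
  c⁻¹ * (trace ((-2 : ℝ) • (Yᵀ * W * Y)) + c⁻¹ * trace (Yᵀ * D * Y * (Yᵀ * D * Y)))

theorem orthFreeObjective_mul_eq {U : Matrix ι ρ ℝ} {lam : ρ → ℝ} (hc : c ≠ 0)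
    (hEig : W * U = D * U * diagonal lam) (hOrth : Uᵀ * D * U = c • 1) (Z : Matrix ρ κ ℝ) :
    orthFreeObjective W D c (U * Z) = reducedObjective (diagonal lam) Z := by
  have hW : (U * Z)ᵀ * W * (U * Z) = c • (Zᵀ * diagonal lam * Z) := by
    calc (U * Z)ᵀ * W * (U * Z) = Zᵀ * (Uᵀ * (W * U)) * Z := by
          simp only [transpose_mul, Matrix.mul_assoc]
      _ = c • (Zᵀ * diagonal lam * Z) := by
          rw [hEig, ← Matrix.mul_assoc Uᵀ, ← Matrix.mul_assoc Uᵀ, hOrth]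
          simp [Matrix.mul_assoc]
  have hD : (U * Z)ᵀ * D * (U * Z) = c • (Zᵀ * Z) := by
    calc (U * Z)ᵀ * D * (U * Z) = Zᵀ * (Uᵀ * D * U) * Z := by
          simp only [transpose_mul, Matrix.mul_assoc]
      _ = c • (Zᵀ * Z) := by simp [hOrth]
  rw [orthFreeObjective, reducedObjective, hW, hD]
  simp only [smul_smul, Matrix.smul_mul, Matrix.mul_smul, trace_smul, smul_eq_mul]
  field_simp
  ring

theorem IsLocalMin.reducedObjective_of_orthFreeObjective [DecidableEq ι] {U : Matrix ι ρ ℝ}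
    {lam : ρ → ℝ} (hc : c ≠ 0) (e : ρ ≃ ι) (hEig : W * U = D * U * diagonal lam)
    (hOrth : Uᵀ * D * U = c • 1) {Y : Matrix ι κ ℝ}
    (hmin : IsLocalMin (orthFreeObjective W D c) Y) :
    U * (c⁻¹ • (Uᵀ * D) * Y) = Y ∧
      IsLocalMin (reducedObjective (diagonal lam)) (c⁻¹ • (Uᵀ * D) * Y) := by
  have hinv : U * (c⁻¹ • (Uᵀ * D)) = 1 := by
    refine (mul_eq_one_comm_of_equiv e).mp ?_
    rw [Matrix.smul_mul, hOrth, smul_smul, inv_mul_cancel₀ hc, one_smul]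
  have hY : U * (c⁻¹ • (Uᵀ * D) * Y) = Y := by rw [← Matrix.mul_assoc, hinv, Matrix.one_mul]
  refine ⟨hY, ?_⟩
  rw [← funext (orthFreeObjective_mul_eq hc hEig hOrth)]
  rw [← hY] at hmin
  exact hmin.comp_continuous (by fun_prop)

theorem IsLocalMin.exists_orthogonal_of_orthFreeObjective [DecidableEq ι] [DecidableEq κ]
    {U : Matrix ι ι ℝ} {lam : ι → ℝ} (hc : c ≠ 0) (σ : κ ⊕ ρ ≃ ι)
    (hEig : W * U = D * U * diagonal lam) (hOrth : Uᵀ * D * U = c • 1)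
    (hpos : ∀ i, 0 < lam (σ (.inl i))) (hgap : ∀ i j, lam (σ (.inr j)) < lam (σ (.inl i)))
    {Y : Matrix ι κ ℝ} (hmin : IsLocalMin (orthFreeObjective W D c) Y) :
    ∃ Q : Matrix κ κ ℝ, Qᵀ * Q = 1 ∧ Q * Qᵀ = 1 ∧
      Y = U.submatrix id (σ ∘ .inl) * diagonal (fun i => √(lam (σ (.inl i)))) * Q := by
  set V := U.submatrix id σ
  have hEigV : W * V = D * V * diagonal (Sum.elim (fun i => lam (σ (.inl i)))
      (fun j => lam (σ (.inr j)))) := by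
    ext i k
    have hik := congrFun (congrFun hEig i) (σ k)
    rw [mul_diagonal] at hik ⊢
    cases k <;> simpa [V, mul_apply] using hik
  have hOrthV : Vᵀ * D * V = c • 1 := by
    ext k l
    simpa [V, mul_apply, one_apply] using congrFun (congrFun hOrth (σ k)) (σ l)
  obtain ⟨hYZ, hZmin⟩ := hmin.reducedObjective_of_orthFreeObjective hc σ hEigV hOrthV
  set Z := c⁻¹ • (Vᵀ * D) * Y
  rw [← fromRows_toRows Z] at hZmin hYZ
  obtain ⟨hZ₂, hZ₁⟩ := hZmin.bottom_eq_zero_and_top_mul_transpose_eq_diagonal hpos hgap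
  obtain ⟨Q, hQ₁, hQ₂, hQ⟩ := exists_orthogonal_of_mul_transpose_eq_diagonal hpos hZ₁
  refine ⟨Q, hQ₁, hQ₂, ?_⟩
  rw [← hYZ, hZ₂, ← fromCols_toCols V, fromCols_mul_fromRows, Matrix.mul_zero, add_zero, hQ,
    Matrix.mul_assoc]
  rfl

end ChangeOfVariables

theorem stmt_2_general (n K : ℕ) (hKn : K < n)
    (W D : Matrix (Fin n) (Fin n) ℝ)
    (lam : Fin n → ℝ) (Ufull : Matrix (Fin n) (Fin n) ℝ)
    (hEig : W * Ufull = D * Ufull * diagonal lam)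
    (hOrth : Ufullᵀ * D * Ufull = ((n : ℝ) ^ 2) • (1 : Matrix (Fin n) (Fin n) ℝ))
    (hpos : ∀ i : Fin n, (i : ℕ) < K → 0 < lam i)
    (hgap : ∀ i j : Fin n, (i : ℕ) < K → K ≤ (j : ℕ) → lam j < lam i)
    (Y : Matrix (Fin n) (Fin K) ℝ)
    (hmin : IsLocalMin (fun Z : Matrix (Fin n) (Fin K) ℝ =>
      ((n : ℝ) ^ 2)⁻¹ * (trace ((-2 : ℝ) • (Zᵀ * W * Z))
        + ((n : ℝ) ^ 2)⁻¹ * trace (Zᵀ * D * Z * (Zᵀ * D * Z)))) Y) :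
    ∃ Q : Matrix (Fin K) (Fin K) ℝ, Qᵀ * Q = 1 ∧ Q * Qᵀ = 1 ∧
      Y = Ufull.submatrix id (Fin.castLE hKn.le)
        * diagonal (fun i : Fin K => Real.sqrt (lam (Fin.castLE hKn.le i))) * Q := by
  let σ : Fin K ⊕ Fin (n - K) ≃ Fin n :=
    finSumFinEquiv.trans (finCongr (Nat.add_sub_cancel' hKn.le))
  have hσ : ∀ i, σ (.inl i) = Fin.castLE hKn.le i := fun i => Fin.ext (by simp [σ])
  have hc : ((n : ℝ) ^ 2) ≠ 0 := pow_ne_zero 2 (Nat.cast_ne_zero.mpr (by omega))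
  obtain ⟨Q, hQ₁, hQ₂, hY⟩ := IsLocalMin.exists_orthogonal_of_orthFreeObjective hc σ hEig hOrth
    (fun i => by rw [hσ]; exact hpos _ i.isLt)
    (fun i j => hgap _ _ (by rw [hσ]; exact i.isLt) (by simp [σ])) hmin
  rw [show σ ∘ Sum.inl = Fin.castLE hKn.le from funext hσ] at hY
  simp only [hσ] at hY
  exact ⟨Q, hQ₁, hQ₂, hY⟩

/-- Every local minimizer of the orthogonalization-free objective has the form
`Y* = U_K Λ_K^{1/2} Q` with `Q` orthogonal. -/
theorem stmt_2 (n K : ℕ) (hn : 0 < n) (hKn : K < n)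
    (W D : Matrix (Fin n) (Fin n) ℝ) (hW : W.IsSymm) (hDdiag : D.IsDiag)
    (hDpos : D.PosDef)
    (lam : Fin n → ℝ) (Ufull : Matrix (Fin n) (Fin n) ℝ)
    (hEig : W * Ufull = D * Ufull * diagonal lam)
    (hOrth : Ufullᵀ * D * Ufull = ((n : ℝ) ^ 2) • (1 : Matrix (Fin n) (Fin n) ℝ))
    (hsort : ∀ i j : Fin n, i ≤ j → lam j ≤ lam i)
    (hpos : ∀ i : Fin n, (i : ℕ) < K → 0 < lam i)
    (hgap : ∀ i j : Fin n, (i : ℕ) < K → K ≤ (j : ℕ) → lam j < lam i)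
    (Y : Matrix (Fin n) (Fin K) ℝ)
    (hmin : IsLocalMin (fun Z : Matrix (Fin n) (Fin K) ℝ =>
      ((n : ℝ) ^ 2)⁻¹ * (trace ((-2 : ℝ) • (Zᵀ * W * Z))
        + ((n : ℝ) ^ 2)⁻¹ * trace (Zᵀ * D * Z * (Zᵀ * D * Z)))) Y) :
    ∃ Q : Matrix (Fin K) (Fin K) ℝ, Qᵀ * Q = 1 ∧ Q * Qᵀ = 1 ∧
      Y = Ufull.submatrix id (Fin.castLE hKn.le)
        * diagonal (fun i : Fin K => Real.sqrt (lam (Fin.castLE hKn.le i))) * Q :=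
  stmt_2_general n K hKn W D lam Ufull hEig hOrth hpos hgap Y hmin
end

section
/- The function f(Y) = (1/n²)trace(-2YᵀWY + (1/n²)YᵀDYYᵀDY) on ℝ^{n×K}, with D diagonal positive definite, is coercive: f(Y) → +∞ as ‖Y‖_F → ∞, and f is bounded from below; consequently f attains a global minimum. -/
/-!
Write `s = ∑ᵢⱼ Yᵢⱼ²` and `d = minᵢ Dᵢᵢ > 0`. The quadratic term is `O(s)`, while
`M = YᵀDY` is symmetric with `trace M ≥ d s`, so `trace (M M) ≥ (trace M)² / K ≥ d² s² / K`
by Cauchy–Schwarz on the diagonal of `M`. Hence `f ≥ α s² - β s` with `α > 0`, so `f` tends to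
`+∞` along the cocompact filter, which is the comap of the Frobenius norm to `atTop`; being
continuous, `f` attains its minimum.
-/

open Matrix Filter

namespace Matrix

variable {m n : Type*} [Fintype m] [Fintype n]

theorem comap_sqrt_sum_sq_atTop :
    comap (fun Y : Matrix m n ℝ => √(∑ i, ∑ j, Y i j ^ 2)) atTop = cocompact (Matrix m n ℝ) := by
  let := frobeniusNormedAddCommGroup (m := m) (n := n) (α := ℝ)
  let := frobeniusNormedSpace (m := m) (n := n) (R := ℝ) (α := ℝ)
  have h : (fun Y : Matrix m n ℝ => √(∑ i, ∑ j, Y i j ^ 2)) = norm := by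
    ext Y
    simp [frobenius_norm_def, Real.sqrt_eq_rpow]
  rw [h, comap_norm_atTop, Metric.cobounded_eq_cocompact]
  -- the Frobenius norm induces the product topology up to definitional unfolding
  rfl

theorem tendsto_sum_sq_cocompact_atTop :
    Tendsto (fun Y : Matrix m n ℝ => ∑ i, ∑ j, Y i j ^ 2) (cocompact _) atTop := by
  rw [← comap_sqrt_sum_sq_atTop]
  refine ((tendsto_pow_atTop two_ne_zero).comp tendsto_comap).congr fun Y => ?_
  exact Real.sq_sqrt (by positivity)

theorem trace_transpose_mul_mul_le (W : Matrix m m ℝ) (Y : Matrix m n ℝ) :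
    trace (Yᵀ * W * Y) ≤ Fintype.card n * (∑ i, ∑ j, |W i j|) * ∑ i, ∑ k, Y i k ^ 2 := by
  set s := ∑ i, ∑ k, Y i k ^ 2
  have hsq : ∀ i k, Y i k ^ 2 ≤ s := fun i k =>
    (Finset.single_le_sum (fun k _ => sq_nonneg (Y i k)) (Finset.mem_univ k)).trans <|
      Finset.single_le_sum (f := fun i => ∑ k, Y i k ^ 2)
        (fun i _ => Finset.sum_nonneg fun k _ => sq_nonneg (Y i k)) (Finset.mem_univ i)
  have hterm : ∀ i j k, Y i k * W i j * Y j k ≤ |W i j| * s := fun i j k => by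
    have : |Y i k * Y j k| ≤ s := by
      rw [abs_mul]
      nlinarith [hsq i k, hsq j k, sq_abs (Y i k), sq_abs (Y j k),
        two_mul_le_add_sq |Y i k| |Y j k|]
    calc Y i k * W i j * Y j k ≤ |W i j * (Y i k * Y j k)| := by
          rw [show Y i k * W i j * Y j k = W i j * (Y i k * Y j k) by ring]; exact le_abs_self _
      _ ≤ |W i j| * s := by rw [abs_mul]; gcongr
  calc trace (Yᵀ * W * Y) = ∑ k, ∑ j, ∑ i, Y i k * W i j * Y j k := by
        simp [trace, mul_apply, Finset.sum_mul]
    _ ≤ ∑ _k : n, ∑ j, ∑ i, |W i j| * s :=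
        Finset.sum_le_sum fun k _ => Finset.sum_le_sum fun j _ =>
          Finset.sum_le_sum fun i _ => hterm i j k
    _ = Fintype.card n * (∑ i, ∑ j, |W i j|) * s := by
        rw [Finset.sum_comm (f := fun j i => |W i j| * s)]
        simp [Finset.sum_mul, mul_assoc]

theorem sum_diag_sq_le_trace_mul_self {M : Matrix n n ℝ} (hM : M.IsSymm) :
    ∑ j, M j j ^ 2 ≤ trace (M * M) := by
  simp only [trace, diag, mul_apply]
  refine Finset.sum_le_sum fun j _ => ?_
  calc M j j ^ 2 ≤ ∑ l, M j l ^ 2 :=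
        Finset.single_le_sum (fun l _ => sq_nonneg (M j l)) (Finset.mem_univ j)
    _ = ∑ l, M j l * M l j := Finset.sum_congr rfl fun l _ => by rw [sq, hM.apply j l]

theorem trace_mul_self_nonneg {M : Matrix n n ℝ} (hM : M.IsSymm) : 0 ≤ trace (M * M) :=
  (Finset.sum_nonneg fun j _ => sq_nonneg (M j j)).trans (sum_diag_sq_le_trace_mul_self hM)

theorem sq_trace_le_card_mul_trace_mul_self {M : Matrix n n ℝ} (hM : M.IsSymm) :
    trace M ^ 2 ≤ Fintype.card n * trace (M * M) :=
  calc trace M ^ 2 ≤ Fintype.card n * ∑ j, M j j ^ 2 := sq_sum_le_card_mul_sum_sq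
    _ ≤ Fintype.card n * trace (M * M) := by gcongr; exact sum_diag_sq_le_trace_mul_self hM

theorem trace_transpose_mul_diagonal_mul [DecidableEq m] (v : m → ℝ) (Y : Matrix m n ℝ) :
    trace (Yᵀ * diagonal v * Y) = ∑ i, v i * ∑ k, Y i k ^ 2 := by
  rw [trace_mul_cycle]
  simp [trace, mul_apply, diagonal, Finset.mul_sum, sq, mul_comm]

theorem mul_sum_sq_le_trace_transpose_mul_mul {D : Matrix m m ℝ} (hD : D.IsDiag) {d : ℝ}
    (hd : ∀ i, d ≤ D i i) (Y : Matrix m n ℝ) :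
    d * ∑ i, ∑ k, Y i k ^ 2 ≤ trace (Yᵀ * D * Y) := by
  classical
  rw [← hD.diagonal_diag, trace_transpose_mul_diagonal_mul, Finset.mul_sum]
  gcongr with i
  exact hd i

-- `card n + 1` rather than `card n` keeps the constant positive also when `n` is empty.
theorem sq_div_mul_sq_le_trace_transpose_mul_mul_sq {D : Matrix m m ℝ} (hD : D.IsDiag) {d : ℝ}
    (hd₀ : 0 ≤ d) (hd : ∀ i, d ≤ D i i) (Y : Matrix m n ℝ) :
    d ^ 2 / (Fintype.card n + 1) * (∑ i, ∑ k, Y i k ^ 2) ^ 2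
      ≤ trace (Yᵀ * D * Y * (Yᵀ * D * Y)) := by
  have hM : (Yᵀ * D * Y).IsSymm := by simp [IsSymm, Matrix.mul_assoc, hD.isSymm.eq]
  have hsq : (d * ∑ i, ∑ k, Y i k ^ 2) ^ 2 ≤ Fintype.card n * trace (Yᵀ * D * Y * (Yᵀ * D * Y)) :=
    (pow_le_pow_left₀ (by positivity) (mul_sum_sq_le_trace_transpose_mul_mul hD hd Y) 2).trans
      (sq_trace_le_card_mul_trace_mul_self hM)
  rw [div_mul_eq_mul_div, div_le_iff₀ (by positivity)]
  nlinarith [trace_mul_self_nonneg hM]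

end Matrix

theorem Matrix.PosDef.exists_pos_le_diag {n : Type*} [Finite n] {D : Matrix n n ℝ}
    (hD : D.PosDef) : ∃ d > 0, ∀ i, d ≤ D i i := by
  cases isEmpty_or_nonempty n
  · exact ⟨1, one_pos, isEmptyElim⟩
  · obtain ⟨i₀, hi₀⟩ := Finite.exists_min fun i => D i i
    exact ⟨D i₀ i₀, hD.diag_pos, hi₀⟩

theorem Filter.Tendsto.atTop_of_quadratic_le {X : Type*} {l : Filter X} {f s : X → ℝ}
    {a b : ℝ} (ha : 0 < a) (hs : Tendsto s l atTop) (h : ∀ x, a * s x ^ 2 - b * s x ≤ f x) :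
    Tendsto f l atTop := by
  have : Tendsto (fun t : ℝ => a * t ^ 2 - b * t) atTop atTop := by
    refine (tendsto_id.atTop_mul_atTop₀ <| tendsto_atTop_add_const_right _ (-b) <|
      tendsto_id.const_mul_atTop ha).congr fun t => ?_
    simp only [id]
    ring
  exact tendsto_atTop_mono h (this.comp hs)

theorem stmt_4_general (n K : ℕ) (hn : 0 < n)
    (W D : Matrix (Fin n) (Fin n) ℝ) (hDdiag : D.IsDiag)
    (hDpos : D.PosDef)
    (f : Matrix (Fin n) (Fin K) ℝ → ℝ)
    (hf : ∀ Z, f Z = ((n : ℝ) ^ 2)⁻¹ * (trace ((-2 : ℝ) • (Zᵀ * W * Z))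
      + ((n : ℝ) ^ 2)⁻¹ * trace (Zᵀ * D * Z * (Zᵀ * D * Z)))) :
    Filter.Tendsto f
        (Filter.comap (fun Y : Matrix (Fin n) (Fin K) ℝ =>
          Real.sqrt (∑ i, ∑ j, (Y i j) ^ 2)) Filter.atTop) Filter.atTop ∧
      BddBelow (Set.range f) ∧ ∃ Y₀, ∀ Y, f Y₀ ≤ f Y := by
  obtain ⟨d, hd, hdD⟩ := hDpos.exists_pos_le_diag
  set c : ℝ := ((n : ℝ) ^ 2)⁻¹
  have hlow : ∀ Y : Matrix (Fin n) (Fin K) ℝ,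
      c * c * (d ^ 2 / (K + 1)) * (∑ i, ∑ j, Y i j ^ 2) ^ 2
        - c * (2 * K * ∑ i, ∑ j, |W i j|) * ∑ i, ∑ j, Y i j ^ 2 ≤ f Y := by
    intro Y
    have hquad : trace (Yᵀ * W * Y) ≤ K * (∑ i, ∑ j, |W i j|) * ∑ i, ∑ j, Y i j ^ 2 := by
      simpa using trace_transpose_mul_mul_le W Y
    have hquart := sq_div_mul_sq_le_trace_transpose_mul_mul_sq hDdiag hd.le hdD Y
    rw [Fintype.card_fin] at hquart
    rw [hf, trace_smul, smul_eq_mul]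
    calc _ = c * (-2 * (K * (∑ i, ∑ j, |W i j|) * ∑ i, ∑ j, Y i j ^ 2)
          + c * (d ^ 2 / (K + 1) * (∑ i, ∑ j, Y i j ^ 2) ^ 2)) := by ring
      _ ≤ _ := by gcongr c * (?_ + c * ?_); linarith
  have hcoer : Tendsto f (cocompact _) atTop :=
    tendsto_sum_sq_cocompact_atTop.atTop_of_quadratic_le (by positivity) hlow
  have hcont : Continuous f := by
    rw [show f = _ from funext hf]
    fun_prop
  obtain ⟨Y₀, hY₀⟩ := hcont.exists_forall_le hcoer
  exact ⟨hcoer.mono_left comap_sqrt_sum_sq_atTop.le, ⟨f Y₀, Set.forall_mem_range.2 hY₀⟩, Y₀, hY₀⟩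

/-- The orthogonalization-free objective is coercive and bounded below, hence
attains a global minimum. -/
theorem stmt_4 (n K : ℕ) (hn : 0 < n)
    (W D : Matrix (Fin n) (Fin n) ℝ) (hW : W.IsSymm) (hDdiag : D.IsDiag)
    (hDpos : D.PosDef)
    (f : Matrix (Fin n) (Fin K) ℝ → ℝ)
    (hf : ∀ Z, f Z = ((n : ℝ) ^ 2)⁻¹ * (trace ((-2 : ℝ) • (Zᵀ * W * Z))
      + ((n : ℝ) ^ 2)⁻¹ * trace (Zᵀ * D * Z * (Zᵀ * D * Z)))) :
    Filter.Tendsto f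
        (Filter.comap (fun Y : Matrix (Fin n) (Fin K) ℝ =>
          Real.sqrt (∑ i, ∑ j, (Y i j) ^ 2)) Filter.atTop) Filter.atTop ∧
      BddBelow (Set.range f) ∧ ∃ Y₀, ∀ Y, f Y₀ ≤ f Y :=
  stmt_4_general n K hn W D hDdiag hDpos f hf
end

section
/- Let X_i := D_i^{1/2}Y_i for rows Y_i of Y ∈ ℝ^{n×K}, and define M₁ := max_i (W_{i,i} + sqrt(W_{i,i}² + D_i‖W_{i,i^c}D_{i^c}^{-1/2}‖₂² + D_i/2))/(2D_i), M₂ := max_i (W_{i,i}²/(4D_i) + ‖W_{i,i^c}D_{i^c}^{-1/2}‖₂²/4), and M(R) := 3(max_i W_{i,i}²R² + max_i D_i² n²K²R⁶ + max_i D_i‖W_{i,i^c}D_{i^c}^{-1/2}‖₂² nR²). If R ≥ 2√M₁ and the stepsize α satisfies α < min{(-2M₂ + sqrt(4M₂² + 3M(R)R²))/(8M(R)), 1/(16M(R))}, then the block-coordinate gradient descent update Y_i⁺ = Y_i + 4α(W_{i,:}Y - D_iY_i(YᵀDY)) for i in any batch maps the set W₀ = {Y : max_i ‖D_i^{1/2}Y_i‖₂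 < R} into itself. -/
open Matrix

set_option maxHeartbeats 1000000 in
/-- The block-coordinate gradient descent update with sufficiently small stepsize
maps the ball `W₀ = {Y : max_i ‖D_i^{1/2} Y_i‖₂ < R}` into itself. -/
theorem stmt_6 (n K : ℕ) (hn : 0 < n) (hK : 0 < K)
    (W : Matrix (Fin n) (Fin n) ℝ) (hW : W.IsSymm) (hWnn : ∀ i j, 0 ≤ W i j)
    (Dd : Fin n → ℝ) (hDd : ∀ i, 0 < Dd i)
    (M1 M2 MR R α : ℝ)
    (hM1 : M1 = ⨆ i, (W i i + Real.sqrt ((W i i) ^ 2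
      + Dd i * (∑ j ∈ Finset.univ.erase i, (W i j) ^ 2 / Dd j) + Dd i / 2)) / (2 * Dd i))
    (hM2 : M2 = ⨆ i, ((W i i) ^ 2 / (4 * Dd i)
      + (∑ j ∈ Finset.univ.erase i, (W i j) ^ 2 / Dd j) / 4))
    (hMR : MR = 3 * ((⨆ i, (W i i) ^ 2) * R ^ 2
      + (⨆ i, (Dd i) ^ 2) * (n : ℝ) ^ 2 * (K : ℝ) ^ 2 * R ^ 6
      + (⨆ i, Dd i * (∑ j ∈ Finset.univ.erase i, (W i j) ^ 2 / Dd j)) * (n : ℝ) * R ^ 2))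
    (hR : 2 * Real.sqrt M1 ≤ R)
    (hαpos : 0 < α)
    (hα : α < min ((-2 * M2 + Real.sqrt (4 * M2 ^ 2 + 3 * MR * R ^ 2)) / (8 * MR))
      (1 / (16 * MR)))
    (B : Finset (Fin n))
    (Y Y' : Matrix (Fin n) (Fin K) ℝ)
    (hY' : ∀ i k, Y' i k = if i ∈ B then
      Y i k + 4 * α * ((∑ j, W i j * Y j k)
        - Dd i * ∑ l, Y i l * (∑ j, Y j l * Dd j * Y j k))
      else Y i k)
    (hY : ∀ i, Real.sqrt (Dd i) * Real.sqrt (∑ k, (Y i k) ^ 2) < R) :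
    ∀ i, Real.sqrt (Dd i) * Real.sqrt (∑ k, (Y' i k) ^ 2) < R := by
  have csup : ∀ (f : Fin n → ℝ) (j : Fin n), f j ≤ ⨆ i, f i := fun f j =>
    le_ciSup (Set.Finite.bddAbove (Set.finite_range f)) j
  have hR0 : 0 < R := lt_of_le_of_lt (by positivity) (hY ⟨0, hn⟩)
  have hsq : ∀ j, Dd j * (∑ k, (Y j k) ^ 2) < R ^ 2 := by
    intro j
    have h1 := hY j
    have hS : (0:ℝ) ≤ ∑ k, (Y j k) ^ 2 := by positivity
    nlinarith only [Real.sq_sqrt (hDd j).le, Real.sq_sqrt hS, Real.sqrt_nonneg (Dd j),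
      Real.sqrt_nonneg (∑ k, (Y j k) ^ 2), h1, hR0,
      mul_nonneg (Real.sqrt_nonneg (Dd j)) (Real.sqrt_nonneg (∑ k, (Y j k) ^ 2))]
  have hsqnn : ∀ j, 0 ≤ Dd j * (∑ k, (Y j k) ^ 2) := by
    intro j
    have : (0:ℝ) ≤ ∑ k, (Y j k) ^ 2 := by positivity
    exact mul_nonneg (hDd j).le this
  intro i
  by_cases hiB : i ∈ B
  swap
  · have : (∑ k, (Y' i k) ^ 2) = ∑ k, (Y i k) ^ 2 := by
      apply Finset.sum_congr rfl; intro k _; rw [hY' i k, if_neg hiB]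
    rw [this]; exact hY i
  -- ====== main case: i ∈ B ======
  have hd : 0 < Dd i := hDd i
  set C1 := ⨆ j, (W j j) ^ 2 with hC1def
  set C2 := ⨆ j, (Dd j) ^ 2 with hC2def
  set C3 := ⨆ j, Dd j * (∑ l ∈ Finset.univ.erase j, (W j l) ^ 2 / Dd l) with hC3def
  set c := W i i with hcc
  have hc : 0 ≤ c := hWnn i i
  set E := Finset.univ.erase i with hEdef
  set w2 := ∑ j ∈ E, (W i j) ^ 2 / Dd j with hw2def
  have hw2 : 0 ≤ w2 := Finset.sum_nonneg fun j _ => div_nonneg (sq_nonneg _) (hDd j).le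
  set u : Fin n → ℝ := fun j => ∑ k, Y i k * Y j k with hu
  set s2 := Dd i * ∑ k, (Y i k) ^ 2 with hs2def
  have hs2nn : 0 ≤ s2 := hsqnn i
  have hs2R : s2 < R ^ 2 := hsq i
  set g0 : Fin K → ℝ := fun k => (∑ j, W i j * Y j k)
    - Dd i * ∑ l, Y i l * (∑ j, Y j l * Dd j * Y j k) with hg0
  -- sup bounds at index i
  have hC1i : c ^ 2 ≤ C1 := csup (fun j => (W j j) ^ 2) i
  have hC2i : (Dd i) ^ 2 ≤ C2 := csup (fun j => (Dd j) ^ 2) i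
  have hC3i : Dd i * w2 ≤ C3 :=
    csup (fun j => Dd j * (∑ l ∈ Finset.univ.erase j, (W j l) ^ 2 / Dd l)) i
  have hC1nn : 0 ≤ C1 := le_trans (sq_nonneg c) hC1i
  have hC2pos : 0 < C2 := lt_of_lt_of_le (pow_pos hd 2) hC2i
  have hC3nn : 0 ≤ C3 := le_trans (mul_nonneg hd.le hw2) hC3i
  have hn1 : (1:ℝ) ≤ (n:ℝ) := by exact_mod_cast hn
  have hK1 : (1:ℝ) ≤ (K:ℝ) := by exact_mod_cast hK
  -- weighted Cauchy-Schwarz helper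
  have hCSgen : ∀ (v : Fin n → ℝ),
      (∑ j ∈ E, W i j * v j) ^ 2 ≤ w2 * ∑ j ∈ E, Dd j * (v j) ^ 2 := by
    intro v
    have h := Finset.sum_mul_sq_le_sq_mul_sq E (fun j => W i j / Real.sqrt (Dd j))
      (fun j => Real.sqrt (Dd j) * v j)
    have e1 : (∑ j ∈ E, W i j / Real.sqrt (Dd j) * (Real.sqrt (Dd j) * v j))
        = ∑ j ∈ E, W i j * v j := by
      apply Finset.sum_congr rfl; intro j _
      have hne : Real.sqrt (Dd j) ≠ 0 := (Real.sqrt_pos.mpr (hDd j)).ne'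
      field_simp
    have e2 : (∑ j ∈ E, (W i j / Real.sqrt (Dd j)) ^ 2) = w2 := by
      rw [hw2def]; apply Finset.sum_congr rfl; intro j _
      rw [div_pow, Real.sq_sqrt (hDd j).le]
    have e3 : (∑ j ∈ E, (Real.sqrt (Dd j) * v j) ^ 2) = ∑ j ∈ E, Dd j * (v j) ^ 2 := by
      apply Finset.sum_congr rfl; intro j _
      rw [mul_pow, Real.sq_sqrt (hDd j).le]
    rw [e1, e2, e3] at h
    exact h
  -- identity 1
  have id1 : ∑ k, Y i k * (∑ j, W i j * Y j k) = ∑ j, W i j * u j := by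
    have h1 : ∀ k, Y i k * (∑ j, W i j * Y j k) = ∑ j, W i j * (Y i k * Y j k) := by
      intro k; rw [Finset.mul_sum]; exact Finset.sum_congr rfl fun j _ => by ring
    rw [Finset.sum_congr rfl fun k _ => h1 k, Finset.sum_comm]
    exact Finset.sum_congr rfl fun j _ => by rw [Finset.mul_sum]
  -- identity 2
  have inner2 : ∀ k, (∑ l, Y i l * (∑ j, Y j l * Dd j * Y j k))
      = ∑ j, (Dd j * u j) * Y j k := by
    intro k
    have h1 : ∀ l, Y i l * (∑ j, Y j l * Dd j * Y j k)
        = ∑ j, Dd j * (Y i l * Y j l) * Y j k := by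
      intro l; rw [Finset.mul_sum]; exact Finset.sum_congr rfl fun j _ => by ring
    rw [Finset.sum_congr rfl fun l _ => h1 l, Finset.sum_comm]
    apply Finset.sum_congr rfl; intro j _
    rw [← Finset.sum_mul, ← Finset.mul_sum]
  have id2 : ∑ k, Y i k * (∑ l, Y i l * (∑ j, Y j l * Dd j * Y j k))
      = ∑ j, Dd j * (u j) ^ 2 := by
    have h1 : ∀ k, Y i k * (∑ l, Y i l * (∑ j, Y j l * Dd j * Y j k))
        = ∑ j, (Dd j * u j) * (Y i k * Y j k) := by
      intro k; rw [inner2 k, Finset.mul_sum]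
      exact Finset.sum_congr rfl fun j _ => by ring
    rw [Finset.sum_congr rfl fun k _ => h1 k, Finset.sum_comm]
    apply Finset.sum_congr rfl; intro j _
    rw [← Finset.mul_sum]; ring
  have hui : Dd i * u i = s2 := by
    rw [hs2def, hu]
    congr 1
    exact Finset.sum_congr rfl fun k _ => (pow_two (Y i k)).symm
  -- inner product with the gradient
  have hip1 : ∑ k, Y i k * g0 k
      = (∑ j, W i j * u j) - Dd i * ∑ j, Dd j * (u j) ^ 2 := by
    have h1 : ∀ k, Y i k * g0 k = Y i k * (∑ j, W i j * Y j k)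
        - Dd i * (Y i k * (∑ l, Y i l * (∑ j, Y j l * Dd j * Y j k))) := by
      intro k; simp only [hg0]; ring
    rw [Finset.sum_congr rfl fun k _ => h1 k, Finset.sum_sub_distrib, ← Finset.mul_sum,
      id1, id2]
  have hsplit1 : ∑ j, W i j * u j = (∑ j ∈ E, W i j * u j) + c * u i := by
    rw [hEdef, ← Finset.sum_erase_add Finset.univ _ (Finset.mem_univ i), hcc]
  have hsplit2 : ∑ j, Dd j * (u j) ^ 2
      = (∑ j ∈ E, Dd j * (u j) ^ 2) + Dd i * (u i) ^ 2 := by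
    rw [hEdef, ← Finset.sum_erase_add Finset.univ _ (Finset.mem_univ i)]
  set cross := ∑ j ∈ E, W i j * u j with hcrossdef
  set T := Dd i * ∑ j ∈ E, Dd j * (u j) ^ 2 with hTdef
  have hTnn : 0 ≤ T := by
    rw [hTdef]
    exact mul_nonneg hd.le (Finset.sum_nonneg fun j _ =>
      mul_nonneg (hDd j).le (sq_nonneg _))
  have hipform : Dd i * ∑ k, Y i k * g0 k
      = c * s2 + Dd i * cross - Dd i * s2 ^ 2 - Dd i * T := by
    rw [hip1, hsplit1, hsplit2, ← hui, hTdef, hcrossdef]; ring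
  -- Cauchy-Schwarz for the cross term
  have hCS1 : (Dd i * cross) ^ 2 ≤ (Dd i * w2) * T := by
    have h := hCSgen u
    calc (Dd i * cross) ^ 2 = (Dd i) ^ 2 * cross ^ 2 := by ring
      _ ≤ (Dd i) ^ 2 * (w2 * ∑ j ∈ E, Dd j * (u j) ^ 2) :=
          mul_le_mul_of_nonneg_left h (sq_nonneg _)
      _ = (Dd i * w2) * T := by rw [hTdef]; ring
  have hcrossT : Dd i * cross - Dd i * T ≤ w2 / 4 := by
    set a := Real.sqrt (Dd i * w2) with ha
    set b := Real.sqrt T with hb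
    have ha2 : a ^ 2 = Dd i * w2 := Real.sq_sqrt (mul_nonneg hd.le hw2)
    have hb2 : b ^ 2 = T := Real.sq_sqrt hTnn
    have hann : 0 ≤ a := Real.sqrt_nonneg _
    have hbnn : 0 ≤ b := Real.sqrt_nonneg _
    have h1 : Dd i * cross ≤ a * b := by
      have h2 : Real.sqrt ((Dd i * cross) ^ 2) ≤ Real.sqrt ((Dd i * w2) * T) :=
        Real.sqrt_le_sqrt hCS1
      rw [Real.sqrt_sq_eq_abs, Real.sqrt_mul (mul_nonneg hd.le hw2), ← ha, ← hb] at h2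
      exact (le_abs_self _).trans h2
    have sqh : 0 ≤ a ^ 2 - 4 * Dd i * (a * b) + 4 * (Dd i) ^ 2 * T := by
      rw [← hb2]
      nlinarith only [sq_nonneg (a - 2 * Dd i * b)]
    have key : a * b ≤ w2 / 4 + Dd i * T := by
      nlinarith only [sqh, ha2, hd]
    linarith only [h1, key]
  have hip2 : Dd i * ∑ k, Y i k * g0 k ≤ c * s2 - Dd i * s2 ^ 2 + w2 / 4 := by
    rw [hipform]; linarith
  -- bound by M2
  have hM2i : c ^ 2 / (4 * Dd i) + w2 / 4 ≤ M2 := by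
    rw [hM2]
    exact csup (fun j => (W j j) ^ 2 / (4 * Dd j)
      + (∑ l ∈ Finset.univ.erase j, (W j l) ^ 2 / Dd l) / 4) i
  have hipM2 : Dd i * ∑ k, Y i k * g0 k ≤ M2 := by
    have h1 : c * s2 - Dd i * s2 ^ 2 ≤ c ^ 2 / (4 * Dd i) := by
      rw [le_div_iff₀ (by positivity : (0:ℝ) < 4 * Dd i)]
      nlinarith only [sq_nonneg (c - 2 * Dd i * s2)]
    linarith [hip2]
  -- ===== gradient norm bound =====
  set SB := ∑ k, (∑ j ∈ E, W i j * Y j k) ^ 2 with hSBdef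
  set SC := ∑ k, (∑ l, Y i l * (∑ j, Y j l * Dd j * Y j k)) ^ 2 with hSCdef
  have hB : SB ≤ w2 * ((n:ℝ) * R ^ 2) := by
    have h1 : SB ≤ ∑ k, w2 * ∑ j ∈ E, Dd j * (Y j k) ^ 2 :=
      Finset.sum_le_sum fun k _ => hCSgen (fun j => Y j k)
    have h2 : ∑ k, w2 * ∑ j ∈ E, Dd j * (Y j k) ^ 2
        = w2 * ∑ j ∈ E, Dd j * ∑ k, (Y j k) ^ 2 := by
      rw [← Finset.mul_sum]
      congr 1
      rw [Finset.sum_comm]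
      exact Finset.sum_congr rfl fun j _ => (Finset.mul_sum _ _ _).symm
    have h3 : ∑ j ∈ E, Dd j * ∑ k, (Y j k) ^ 2 ≤ (n:ℝ) * R ^ 2 := by
      calc ∑ j ∈ E, Dd j * ∑ k, (Y j k) ^ 2 ≤ ∑ _j ∈ E, R ^ 2 :=
            Finset.sum_le_sum fun j _ => (hsq j).le
        _ = (E.card : ℝ) * R ^ 2 := by rw [Finset.sum_const, nsmul_eq_mul]
        _ ≤ (n:ℝ) * R ^ 2 := by
            have hcard : (E.card : ℝ) ≤ (n:ℝ) := by
              have := Finset.card_le_card (Finset.erase_subset i (Finset.univ : Finset (Fin n)))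
              rw [hEdef]
              exact_mod_cast le_trans this (le_of_eq (by simp))
            exact mul_le_mul_of_nonneg_right hcard (sq_nonneg R)
    calc SB ≤ ∑ k, w2 * ∑ j ∈ E, Dd j * (Y j k) ^ 2 := h1
      _ = w2 * ∑ j ∈ E, Dd j * ∑ k, (Y j k) ^ 2 := h2
      _ ≤ w2 * ((n:ℝ) * R ^ 2) := mul_le_mul_of_nonneg_left h3 hw2
  -- Frobenius norm of G
  have hGCS : ∀ l k, (∑ j, Y j l * Dd j * Y j k) ^ 2
      ≤ (∑ j, Dd j * (Y j l) ^ 2) * (∑ j, Dd j * (Y j k) ^ 2) := by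
    intro l k
    have h := Finset.sum_mul_sq_le_sq_mul_sq Finset.univ
      (fun j => Real.sqrt (Dd j) * Y j l) (fun j => Real.sqrt (Dd j) * Y j k)
    have e1 : (∑ j, Real.sqrt (Dd j) * Y j l * (Real.sqrt (Dd j) * Y j k))
        = ∑ j, Y j l * Dd j * Y j k := by
      apply Finset.sum_congr rfl; intro j _
      have hss := Real.mul_self_sqrt (hDd j).le
      calc Real.sqrt (Dd j) * Y j l * (Real.sqrt (Dd j) * Y j k)
          = Real.sqrt (Dd j) * Real.sqrt (Dd j) * (Y j l * Y j k) := by ring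
        _ = Dd j * (Y j l * Y j k) := by rw [hss]
        _ = Y j l * Dd j * Y j k := by ring
    have e2 : (∑ j, (Real.sqrt (Dd j) * Y j l) ^ 2) = ∑ j, Dd j * (Y j l) ^ 2 :=
      Finset.sum_congr rfl fun j _ => by rw [mul_pow, Real.sq_sqrt (hDd j).le]
    have e3 : (∑ j, (Real.sqrt (Dd j) * Y j k) ^ 2) = ∑ j, Dd j * (Y j k) ^ 2 :=
      Finset.sum_congr rfl fun j _ => by rw [mul_pow, Real.sq_sqrt (hDd j).le]
    rw [e1, e2, e3] at h
    exact h
  have hAnn : ∀ l, (0:ℝ) ≤ ∑ j, Dd j * (Y j l) ^ 2 := fun l =>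
    Finset.sum_nonneg fun j _ => mul_nonneg (hDd j).le (sq_nonneg _)
  have hAle : ∑ l, (∑ j, Dd j * (Y j l) ^ 2) ≤ (n:ℝ) * R ^ 2 := by
    have h1 : ∑ l, (∑ j, Dd j * (Y j l) ^ 2) = ∑ j, Dd j * (∑ l, (Y j l) ^ 2) := by
      rw [Finset.sum_comm]
      exact Finset.sum_congr rfl fun j _ => (Finset.mul_sum _ _ _).symm
    rw [h1]
    calc ∑ j, Dd j * (∑ l, (Y j l) ^ 2) ≤ ∑ _j : Fin n, R ^ 2 :=
          Finset.sum_le_sum fun j _ => (hsq j).le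
      _ = (n:ℝ) * R ^ 2 := by
          rw [Finset.sum_const, Finset.card_univ, Fintype.card_fin, nsmul_eq_mul]
  have hGnorm : ∑ k, ∑ l, (∑ j, Y j l * Dd j * Y j k) ^ 2 ≤ ((n:ℝ) * R ^ 2) ^ 2 := by
    have h1 : ∑ k, ∑ l, (∑ j, Y j l * Dd j * Y j k) ^ 2
        ≤ ∑ k, ∑ l, (∑ j, Dd j * (Y j k) ^ 2) * (∑ j, Dd j * (Y j l) ^ 2) :=
      Finset.sum_le_sum fun k _ => Finset.sum_le_sum fun l _ =>
        le_of_le_of_eq (hGCS l k) (mul_comm _ _)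
    have h2 : ∑ k, ∑ l, (∑ j, Dd j * (Y j k) ^ 2) * (∑ j, Dd j * (Y j l) ^ 2)
        = (∑ k, (∑ j, Dd j * (Y j k) ^ 2)) * (∑ l, (∑ j, Dd j * (Y j l) ^ 2)) :=
      (Finset.sum_mul_sum _ _ _ _).symm
    calc ∑ k, ∑ l, (∑ j, Y j l * Dd j * Y j k) ^ 2
        ≤ ∑ k, ∑ l, (∑ j, Dd j * (Y j k) ^ 2) * (∑ j, Dd j * (Y j l) ^ 2) := h1
      _ = (∑ k, (∑ j, Dd j * (Y j k) ^ 2)) * (∑ l, (∑ j, Dd j * (Y j l) ^ 2)) := h2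
      _ ≤ ((n:ℝ) * R ^ 2) * ((n:ℝ) * R ^ 2) :=
          mul_le_mul hAle hAle (Finset.sum_nonneg fun l _ => hAnn l) (by positivity)
      _ = ((n:ℝ) * R ^ 2) ^ 2 := by ring
  have hC : SC ≤ (∑ k, (Y i k) ^ 2) * ((n:ℝ) * R ^ 2) ^ 2 := by
    have h1 : ∀ k, (∑ l, Y i l * (∑ j, Y j l * Dd j * Y j k)) ^ 2
        ≤ (∑ l, (Y i l) ^ 2) * (∑ l, (∑ j, Y j l * Dd j * Y j k) ^ 2) := fun k =>
      Finset.sum_mul_sq_le_sq_mul_sq Finset.univ (fun l => Y i l)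
        (fun l => ∑ j, Y j l * Dd j * Y j k)
    calc SC ≤ ∑ k, (∑ l, (Y i l) ^ 2) * (∑ l, (∑ j, Y j l * Dd j * Y j k) ^ 2) :=
          Finset.sum_le_sum fun k _ => h1 k
      _ = (∑ l, (Y i l) ^ 2) * ∑ k, ∑ l, (∑ j, Y j l * Dd j * Y j k) ^ 2 :=
          (Finset.mul_sum _ _ _).symm
      _ ≤ (∑ k, (Y i k) ^ 2) * ((n:ℝ) * R ^ 2) ^ 2 :=
          mul_le_mul_of_nonneg_left hGnorm (by positivity)
  -- decompose g0 and combine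
  have hg0k : ∀ k, g0 k = c * Y i k + (∑ j ∈ E, W i j * Y j k)
      - Dd i * (∑ l, Y i l * (∑ j, Y j l * Dd j * Y j k)) := by
    intro k
    simp only [hg0]
    rw [← Finset.sum_erase_add Finset.univ (fun j => W i j * Y j k) (Finset.mem_univ i),
      ← hEdef, ← hcc]
    ring
  have hper : ∀ k, (g0 k) ^ 2 ≤ 3 * (c ^ 2 * (Y i k) ^ 2 + (∑ j ∈ E, W i j * Y j k) ^ 2
      + (Dd i) ^ 2 * (∑ l, Y i l * (∑ j, Y j l * Dd j * Y j k)) ^ 2) := by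
    intro k
    rw [hg0k k]
    nlinarith only [sq_nonneg (c * Y i k - ∑ j ∈ E, W i j * Y j k),
      sq_nonneg (c * Y i k + Dd i * (∑ l, Y i l * (∑ j, Y j l * Dd j * Y j k))),
      sq_nonneg ((∑ j ∈ E, W i j * Y j k) + Dd i * (∑ l, Y i l * (∑ j, Y j l * Dd j * Y j k)))]
  have hgn3 : ∑ k, (g0 k) ^ 2
      ≤ 3 * (c ^ 2 * (∑ k, (Y i k) ^ 2) + SB + (Dd i) ^ 2 * SC) := by
    calc ∑ k, (g0 k) ^ 2
        ≤ ∑ k, 3 * (c ^ 2 * (Y i k) ^ 2 + (∑ j ∈ E, W i j * Y j k) ^ 2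
          + (Dd i) ^ 2 * (∑ l, Y i l * (∑ j, Y j l * Dd j * Y j k)) ^ 2) :=
          Finset.sum_le_sum fun k _ => hper k
      _ = 3 * (c ^ 2 * (∑ k, (Y i k) ^ 2) + SB + (Dd i) ^ 2 * SC) := by
          rw [← Finset.mul_sum, Finset.sum_add_distrib, Finset.sum_add_distrib,
            ← Finset.mul_sum, ← Finset.mul_sum, hSBdef, hSCdef]
  have hgnMR : Dd i * ∑ k, (g0 k) ^ 2 ≤ MR := by
    have q1 : c ^ 2 * s2 ≤ C1 * R ^ 2 := by
      linarith only [mul_le_mul_of_nonneg_left hs2R.le (sq_nonneg c),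
        mul_le_mul_of_nonneg_right hC1i (sq_nonneg R)]
    have q2 : (Dd i * w2) * ((n:ℝ) * R ^ 2) ≤ C3 * (n:ℝ) * R ^ 2 := by
      have := mul_le_mul_of_nonneg_right hC3i
        (by positivity : (0:ℝ) ≤ (n:ℝ) * R ^ 2)
      linarith [this]
    have q3 : (Dd i) ^ 2 * (s2 * ((n:ℝ) * R ^ 2) ^ 2) ≤ C2 * (n:ℝ) ^ 2 * (K:ℝ) ^ 2 * R ^ 6 := by
      have e1 : (Dd i) ^ 2 * s2 ≤ C2 * R ^ 2 := by
        linarith only [mul_le_mul_of_nonneg_left hs2R.le (sq_nonneg (Dd i)),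
          mul_le_mul_of_nonneg_right hC2i (sq_nonneg R)]
      have e2 : (Dd i) ^ 2 * (s2 * ((n:ℝ) * R ^ 2) ^ 2)
          ≤ (C2 * R ^ 2) * ((n:ℝ) * R ^ 2) ^ 2 := by
        linarith only [mul_le_mul_of_nonneg_right e1 (by positivity : (0:ℝ) ≤ ((n:ℝ) * R ^ 2) ^ 2)]
      have e3 : (C2 * R ^ 2) * ((n:ℝ) * R ^ 2) ^ 2 ≤ C2 * (n:ℝ) ^ 2 * (K:ℝ) ^ 2 * R ^ 6 := by
        have hK2 : (1:ℝ) ≤ (K:ℝ) ^ 2 := by nlinarith only [hK1]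
        have base : (0:ℝ) ≤ C2 * (n:ℝ) ^ 2 * R ^ 6 :=
          mul_nonneg (mul_nonneg hC2pos.le (by positivity : (0:ℝ) ≤ (n:ℝ) ^ 2))
            (by positivity : (0:ℝ) ≤ R ^ 6)
        nlinarith only [hK2, base]
      linarith
    have main : Dd i * ∑ k, (g0 k) ^ 2
        ≤ 3 * (c ^ 2 * s2 + (Dd i * w2) * ((n:ℝ) * R ^ 2)
          + (Dd i) ^ 2 * (s2 * ((n:ℝ) * R ^ 2) ^ 2)) := by
      have h1 : Dd i * ∑ k, (g0 k) ^ 2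
          ≤ Dd i * (3 * (c ^ 2 * (∑ k, (Y i k) ^ 2) + SB + (Dd i) ^ 2 * SC)) :=
        mul_le_mul_of_nonneg_left hgn3 hd.le
      have h2 : Dd i * SB ≤ (Dd i * w2) * ((n:ℝ) * R ^ 2) := by
        have := mul_le_mul_of_nonneg_left hB hd.le
        linarith [this]
      have h3 : Dd i * SC ≤ s2 * ((n:ℝ) * R ^ 2) ^ 2 := by
        have h := mul_le_mul_of_nonneg_left hC hd.le
        rw [hs2def]
        linarith only [h]
      have h4 : Dd i * (c ^ 2 * (∑ k, (Y i k) ^ 2)) = c ^ 2 * s2 := by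
        rw [hs2def]; ring
      have h3b := mul_le_mul_of_nonneg_left h3 (sq_nonneg (Dd i))
      calc Dd i * ∑ k, (g0 k) ^ 2
          ≤ Dd i * (3 * (c ^ 2 * (∑ k, (Y i k) ^ 2) + SB + (Dd i) ^ 2 * SC)) := h1
        _ = 3 * (c ^ 2 * s2 + Dd i * SB + (Dd i) ^ 2 * (Dd i * SC)) := by
            rw [hs2def]; ring
        _ ≤ 3 * (c ^ 2 * s2 + (Dd i * w2) * ((n:ℝ) * R ^ 2)
            + (Dd i) ^ 2 * (s2 * ((n:ℝ) * R ^ 2) ^ 2)) := by linarith only [h2, h3b]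
    rw [hMR]
    calc Dd i * ∑ k, (g0 k) ^ 2
        ≤ 3 * (c ^ 2 * s2 + (Dd i * w2) * ((n:ℝ) * R ^ 2)
          + (Dd i) ^ 2 * (s2 * ((n:ℝ) * R ^ 2) ^ 2)) := main
      _ ≤ 3 * (C1 * R ^ 2 + C2 * (n:ℝ) ^ 2 * (K:ℝ) ^ 2 * R ^ 6 + C3 * (n:ℝ) * R ^ 2) := by
          linarith [q1, q2, q3]
  -- ===== expansion of the new squared norm =====
  have hYB : ∀ k, Y' i k = Y i k + 4 * α * g0 k := by
    intro k
    rw [hY' i k, if_pos hiB]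
  have hfinal : Dd i * ∑ k, (Y' i k) ^ 2
      = s2 + 8 * α * (Dd i * ∑ k, Y i k * g0 k)
        + 16 * α ^ 2 * (Dd i * ∑ k, (g0 k) ^ 2) := by
    have h1 : ∀ k, (Y' i k) ^ 2
        = (Y i k) ^ 2 + 8 * α * (Y i k * g0 k) + 16 * α ^ 2 * (g0 k) ^ 2 := by
      intro k; rw [hYB k]; ring
    rw [Finset.sum_congr rfl fun k _ => h1 k, Finset.sum_add_distrib,
      Finset.sum_add_distrib, ← Finset.mul_sum, ← Finset.mul_sum, hs2def]
    ring
  -- ===== step size facts =====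
  have hM2nn : 0 ≤ M2 := le_trans (by positivity) hM2i
  have hMRpos : 0 < MR := by
    rw [hMR]
    have p1 : (0:ℝ) ≤ C1 * R ^ 2 := mul_nonneg hC1nn (sq_nonneg R)
    have p2 : (0:ℝ) < C2 * (n:ℝ) ^ 2 * (K:ℝ) ^ 2 * R ^ 6 := by
      have hn0 : (0:ℝ) < (n:ℝ) := by linarith
      have hK0 : (0:ℝ) < (K:ℝ) := by linarith
      positivity
    have p3 : (0:ℝ) ≤ C3 * (n:ℝ) * R ^ 2 := by
      have hn0 : (0:ℝ) ≤ (n:ℝ) := by linarith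
      positivity
    linarith
  have hα1 : α < (-2 * M2 + Real.sqrt (4 * M2 ^ 2 + 3 * MR * R ^ 2)) / (8 * MR) :=
    lt_of_lt_of_le hα (min_le_left _ _)
  have hα2 : α < 1 / (16 * MR) := lt_of_lt_of_le hα (min_le_right _ _)
  have hαMR : 16 * α ^ 2 * MR < α := by
    have h := (lt_div_iff₀ (by positivity : (0:ℝ) < 16 * MR)).mp hα2
    nlinarith only [h, hαpos, hMRpos]
  have hstep : 8 * α * M2 + 16 * α ^ 2 * MR < 3 / 4 * R ^ 2 := by
    have h1 : α * (8 * MR) < -2 * M2 + Real.sqrt (4 * M2 ^ 2 + 3 * MR * R ^ 2) :=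
      (lt_div_iff₀ (by positivity : (0:ℝ) < 8 * MR)).mp hα1
    have h2 : (0:ℝ) ≤ 2 * M2 + α * (8 * MR) := by
      have := mul_pos hαpos (by positivity : (0:ℝ) < 8 * MR)
      linarith
    have h4 : 2 * M2 + α * (8 * MR) < Real.sqrt (4 * M2 ^ 2 + 3 * MR * R ^ 2) := by
      linarith
    have h3 : (2 * M2 + α * (8 * MR)) ^ 2 < 4 * M2 ^ 2 + 3 * MR * R ^ 2 :=
      (Real.lt_sqrt h2).mp h4
    nlinarith only [h3, hMRpos, hαpos, hM2nn]
  -- ===== conversion back to sqrt form =====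
  have hconv : Dd i * ∑ k, (Y' i k) ^ 2 < R ^ 2 →
      Real.sqrt (Dd i) * Real.sqrt (∑ k, (Y' i k) ^ 2) < R := by
    intro h1
    have hSnn : (0:ℝ) ≤ ∑ k, (Y' i k) ^ 2 := by positivity
    rw [← Real.sqrt_mul hd.le]
    have h2 : Real.sqrt (Dd i * ∑ k, (Y' i k) ^ 2) < Real.sqrt (R ^ 2) :=
      Real.sqrt_lt_sqrt (by positivity) h1
    rwa [Real.sqrt_sq hR0.le] at h2
  apply hconv
  -- ===== the two cases =====
  by_cases hcase : s2 ≤ R ^ 2 / 4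
  · rw [hfinal]
    have e2 : 8 * α * (Dd i * ∑ k, Y i k * g0 k) ≤ 8 * α * M2 :=
      mul_le_mul_of_nonneg_left hipM2 (by positivity)
    have e3 : 16 * α ^ 2 * (Dd i * ∑ k, (g0 k) ^ 2) ≤ 16 * α ^ 2 * MR :=
      mul_le_mul_of_nonneg_left hgnMR (by positivity)
    linarith only [hstep, hcase, e2, e3]
  · push_neg at hcase
    have hM1i : (c + Real.sqrt (c ^ 2 + Dd i * w2 + Dd i / 2)) / (2 * Dd i) ≤ M1 := by
      rw [hM1]
      exact csup (fun j => (W j j + Real.sqrt ((W j j) ^ 2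
        + Dd j * (∑ l ∈ Finset.univ.erase j, (W j l) ^ 2 / Dd l) + Dd j / 2)) / (2 * Dd j)) i
    have hM1nn : 0 ≤ M1 := le_trans (by positivity) hM1i
    have hRM1 : 4 * M1 ≤ R ^ 2 := by
      nlinarith only [Real.sq_sqrt hM1nn, Real.sqrt_nonneg M1, hR, hR0]
    set r := Real.sqrt (c ^ 2 + Dd i * w2 + Dd i / 2) with hr
    have hrnn : 0 ≤ r := Real.sqrt_nonneg _
    have hr2 : r ^ 2 = c ^ 2 + Dd i * w2 + Dd i / 2 := by
      rw [hr]
      exact Real.sq_sqrt (by positivity)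
    have h5 : c + r < 2 * Dd i * s2 := by
      have h7 : M1 < s2 := by linarith
      have h6 : (c + r) / (2 * Dd i) < s2 := lt_of_le_of_lt hM1i h7
      rw [div_lt_iff₀ (by positivity : (0:ℝ) < 2 * Dd i)] at h6
      linarith [h6]
    have hipneg : Dd i * ∑ k, Y i k * g0 k < -(1 / 8) := by
      have h9 : r ^ 2 < (2 * Dd i * s2 - c) ^ 2 := by nlinarith only [hrnn, h5]
      rw [hr2] at h9
      have h8 : c * s2 - Dd i * s2 ^ 2 + w2 / 4 < -(1 / 8) := by
        nlinarith only [hd, h9]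
      linarith [hip2]
    rw [hfinal]
    have e2 : 8 * α * (Dd i * ∑ k, Y i k * g0 k) < 8 * α * (-(1 / 8)) :=
      mul_lt_mul_of_pos_left hipneg (by positivity)
    have e3 : 16 * α ^ 2 * (Dd i * ∑ k, (g0 k) ^ 2) ≤ 16 * α ^ 2 * MR :=
      mul_le_mul_of_nonneg_left hgnMR (by positivity)
    linarith only [hαMR, hs2R, e2, e3]
end

section
/- Suppose W is symmetric with λ_K > λ_{K+1} ≥ 0 for the pencil (W,D) with D diagonal positive definite, and let Y₀ = UΛ^{1/2}PQ be a rank-K stationary point of f(Y) = trace(-2Yᵀ(W/n)Y + Yᵀ(D/n)YYᵀ(D/n)Y) in which the selected eigenvalue set includes λ_{K+1} and excludes some λ_i with i ≤ K. Then choosing S₀ = [U_i 0 ⋯ 0]Q (replacing the column corresponding to eigenvector U_{K+1}), the Hessian satisfies S₀ᵀ∇²f(Y₀)S₀ = -4λ_i + 4λ_{K+1} < 0. -/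
open Matrix

/-- At a rank-`K` stationary point whose selected eigenvalue set includes
`λ_{K+1}` and excludes some leading `λ_i`, the direction `S₀ = [U_i 0 ⋯ 0]Q`
gives Hessian value `-4λ_i + 4λ_{K+1} < 0`. -/
theorem stmt_16 (n K : ℕ) (hK : 0 < K) (hKn : K < n)
    (W D : Matrix (Fin n) (Fin n) ℝ) (hW : W.IsSymm) (hDdiag : D.IsDiag)
    (hDpos : D.PosDef)
    (lam : Fin n → ℝ) (U : Matrix (Fin n) (Fin n) ℝ)
    (hEig : W * U = D * U * diagonal lam)
    (hOrth : Uᵀ * D * U = (n : ℝ) • (1 : Matrix (Fin n) (Fin n) ℝ))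
    (hsort : ∀ i j : Fin n, i ≤ j → lam j ≤ lam i)
    (hnonneg : 0 ≤ lam ⟨K, hKn⟩)
    (hgap : ∀ i j : Fin n, (i : ℕ) < K → K ≤ (j : ℕ) → lam j < lam i)
    (π : Fin K → Fin n) (hπ : Function.Injective π)
    (hπ0 : π ⟨0, hK⟩ = ⟨K, hKn⟩)
    (iIdx : Fin n) (hi : (iIdx : ℕ) < K) (hiExcl : ∀ k, π k ≠ iIdx)
    (Q : Matrix (Fin K) (Fin K) ℝ) (hQ : Q * Qᵀ = 1) (hQ2 : Qᵀ * Q = 1)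
    (Y₀ : Matrix (Fin n) (Fin K) ℝ)
    (hY₀ : Y₀ = U.submatrix id π * diagonal (fun k => Real.sqrt (lam (π k))) * Q)
    (S₀ : Matrix (Fin n) (Fin K) ℝ)
    (hS₀ : ∀ a k, S₀ a k = U a iIdx * Q ⟨0, hK⟩ k) :
    -4 * trace (S₀ᵀ * W * S₀) / (n : ℝ)
        + 4 * trace (S₀ᵀ * D * S₀ * (Y₀ᵀ * D * Y₀)) / (n : ℝ) ^ 2
        + 4 * trace (S₀ᵀ * D * Y₀ * (S₀ᵀ * D * Y₀)) / (n : ℝ) ^ 2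
        + 4 * trace (S₀ᵀ * D * Y₀ * (Y₀ᵀ * D * S₀)) / (n : ℝ) ^ 2
      = -4 * lam iIdx + 4 * lam ⟨K, hKn⟩ ∧
    -4 * lam iIdx + 4 * lam ⟨K, hKn⟩ < 0 := by
  have hn0 : (0:ℝ) < (n:ℝ) := by
    have : 0 < n := lt_trans hK hKn
    exact_mod_cast this
  have hne : (n:ℝ) ≠ 0 := ne_of_gt hn0
  set q0 : Fin K := ⟨0, hK⟩ with hq0def
  set Kn : Fin n := ⟨K, hKn⟩ with hKndef
  set Λ : Matrix (Fin K) (Fin K) ℝ :=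
    diagonal (fun k => Real.sqrt (lam (π k))) with hΛdef
  set Uπ : Matrix (Fin n) (Fin K) ℝ := U.submatrix id π with hUπdef
  -- entries of UᵀDU
  have hOrthE : ∀ a b : Fin n, (Uᵀ * D * U) a b = if a = b then (n:ℝ) else 0 := by
    intro a b
    rw [hOrth]
    simp [Matrix.one_apply]
  -- rank-one decomposition of S₀
  set c : Matrix (Fin n) (Fin 1) ℝ := Matrix.of (fun a _ => U a iIdx) with hcdef
  set r : Matrix (Fin 1) (Fin K) ℝ := Matrix.of (fun _ k => Q q0 k) with hrdef
  have hS : S₀ = c * r := by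
    ext a k
    simp [Matrix.mul_apply, hS₀, hcdef, hrdef]
  have hcMc : ∀ M : Matrix (Fin n) (Fin n) ℝ, ∀ x y : Fin 1,
      (cᵀ * M * c) x y = (Uᵀ * M * U) iIdx iIdx := by
    intro M x y
    simp [Matrix.mul_apply, hcdef]
  -- UᵀWU = n • diag lam
  have hUWU : Uᵀ * W * U = (n:ℝ) • diagonal lam := by
    calc Uᵀ * W * U = Uᵀ * (W * U) := by rw [Matrix.mul_assoc]
      _ = Uᵀ * (D * U * diagonal lam) := by rw [hEig]
      _ = (Uᵀ * D * U) * diagonal lam := by simp only [Matrix.mul_assoc]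
      _ = ((n:ℝ) • (1 : Matrix (Fin n) (Fin n) ℝ)) * diagonal lam := by rw [hOrth]
      _ = (n:ℝ) • diagonal lam := by simp [Matrix.smul_mul]
  -- UπᵀDUπ = n • 1
  have hUπD : Uπᵀ * D * Uπ = (n:ℝ) • (1 : Matrix (Fin K) (Fin K) ℝ) := by
    ext j k
    have h1 : (Uπᵀ * D * Uπ) j k = (Uᵀ * D * U) (π j) (π k) := by
      simp [Matrix.mul_apply, hUπdef]
    rw [h1, hOrthE]
    simp [Matrix.one_apply, hπ.eq_iff]
  -- cᵀ D Uπ = 0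
  have hcDUπ : cᵀ * D * Uπ = 0 := by
    ext x k
    have h1 : (cᵀ * D * Uπ) x k = (Uᵀ * D * U) iIdx (π k) := by
      simp [Matrix.mul_apply, hcdef, hUπdef]
    rw [h1, hOrthE]
    simp [(hiExcl k).symm]
  -- S₀ᵀ D Y₀ = 0
  have hSDY : S₀ᵀ * D * Y₀ = 0 := by
    rw [hS, hY₀, Matrix.transpose_mul]
    rw [show rᵀ * cᵀ * D * (U.submatrix id π * diagonal (fun k => Real.sqrt (lam (π k))) * Q)
        = rᵀ * ((cᵀ * D * Uπ) * Λ * Q) by simp only [hUπdef, hΛdef, Matrix.mul_assoc]]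
    rw [hcDUπ]
    simp
  -- trace rᵀ r = 1
  have htrr : trace (rᵀ * r) = 1 := by
    rw [trace_mul_comm]
    have h00 : (r * rᵀ) 0 0 = (Q * Qᵀ) q0 q0 := by
      simp [Matrix.mul_apply, hrdef]
    have : trace (r * rᵀ) = (r * rᵀ) 0 0 := by
      simp [Matrix.trace, Matrix.diag]
    rw [this, h00, hQ]
    simp [Matrix.one_apply]
  -- term 1
  have t1 : trace (S₀ᵀ * W * S₀) = (n:ℝ) * lam iIdx := by
    rw [hS, Matrix.transpose_mul]
    rw [show rᵀ * cᵀ * W * (c * r) = rᵀ * ((cᵀ * W * c) * r) by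
      simp only [Matrix.mul_assoc]]
    have hc1 : cᵀ * W * c = ((n:ℝ) * lam iIdx) • (1 : Matrix (Fin 1) (Fin 1) ℝ) := by
      ext x y
      rw [hcMc W x y, hUWU]
      simp [Matrix.one_apply, Subsingleton.elim x y, Matrix.diagonal_apply_eq]
    rw [hc1]
    rw [Matrix.smul_mul, Matrix.one_mul, Matrix.mul_smul, trace_smul, htrr]
    simp
  -- S₀ᵀ D S₀ = n • rᵀ r
  have hSDS : S₀ᵀ * D * S₀ = (n:ℝ) • (rᵀ * r) := by
    rw [hS, Matrix.transpose_mul]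
    rw [show rᵀ * cᵀ * D * (c * r) = rᵀ * ((cᵀ * D * c) * r) by
      simp only [Matrix.mul_assoc]]
    have hc1 : cᵀ * D * c = (n:ℝ) • (1 : Matrix (Fin 1) (Fin 1) ℝ) := by
      ext x y
      rw [hcMc D x y, hOrthE]
      simp [Matrix.one_apply, Subsingleton.elim x y]
    rw [hc1, Matrix.smul_mul, Matrix.one_mul, Matrix.mul_smul]
  -- Y₀ᵀ D Y₀ = n • (Qᵀ Λ² Q)
  have hYDY : Y₀ᵀ * D * Y₀ = (n:ℝ) • (Qᵀ * (Λ * Λ) * Q) := by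
    rw [hY₀]
    rw [show (U.submatrix id π * diagonal (fun k => Real.sqrt (lam (π k))) * Q)ᵀ
        = Qᵀ * Λᵀ * Uπᵀ by simp only [hUπdef, hΛdef, Matrix.transpose_mul, Matrix.mul_assoc]]
    rw [show Λᵀ = Λ by simp [hΛdef]]
    rw [show Qᵀ * Λ * Uπᵀ * D * (U.submatrix id π * diagonal (fun k => Real.sqrt (lam (π k))) * Q)
        = Qᵀ * (Λ * ((Uπᵀ * D * Uπ) * (Λ * Q))) by
      simp only [hUπdef, hΛdef, Matrix.mul_assoc]]
    rw [hUπD]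
    simp only [Matrix.smul_mul, Matrix.one_mul, Matrix.mul_smul]
    simp only [Matrix.mul_assoc]
  -- term 2
  have t2 : trace (S₀ᵀ * D * S₀ * (Y₀ᵀ * D * Y₀)) = (n:ℝ)^2 * lam Kn := by
    rw [hSDS, hYDY, Matrix.smul_mul, Matrix.mul_smul, smul_smul, trace_smul]
    have key : trace (rᵀ * r * (Qᵀ * (Λ * Λ) * Q)) = lam Kn := by
      rw [Matrix.mul_assoc, trace_mul_comm]
      have hassoc : r * (Qᵀ * (Λ * Λ) * Q) * rᵀ = (r * Qᵀ) * (Λ * Λ) * (Q * rᵀ) := by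
        simp only [Matrix.mul_assoc]
      rw [hassoc]
      have hrQ : r * Qᵀ = Matrix.of (fun (_ : Fin 1) l => if l = q0 then (1:ℝ) else 0) := by
        ext x l
        have h1 : (r * Qᵀ) x l = (Q * Qᵀ) l q0 := by
          simp [Matrix.mul_apply, hrdef, mul_comm]
        rw [h1, hQ]
        simp [Matrix.one_apply]
      have hQr : Q * rᵀ = (r * Qᵀ)ᵀ := by
        rw [Matrix.transpose_mul, Matrix.transpose_transpose]
      rw [hQr, hrQ]
      have : trace ((Matrix.of (fun (_ : Fin 1) l => if l = q0 then (1:ℝ) else 0)) * (Λ * Λ) *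
          (Matrix.of (fun (_ : Fin 1) l => if l = q0 then (1:ℝ) else 0))ᵀ)
          = Real.sqrt (lam (π q0)) * Real.sqrt (lam (π q0)) := by
        simp [Matrix.trace, Matrix.diag, Matrix.mul_apply, hΛdef, Matrix.diagonal_apply,
          Finset.sum_ite_eq, ite_and]
      rw [this, hπ0]
      exact Real.mul_self_sqrt hnonneg
    rw [key, smul_eq_mul]
    ring
  constructor
  · rw [t1, t2, hSDY]
    simp only [Matrix.zero_mul, trace_zero]
    field_simp
    ring
  · have := hgap iIdx Kn hi (le_refl K)
    linarith
end
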